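/- arXiv:2407.09167 — 10 statements merged into one kernel-verified Lean document; each statement's English description precedes it below -/
import Mathlib

section
/- Let N ≥ 1 and let X, Y : Fin N → ℝ³ be point clouds of size N. For any matrices r₁, r₂ ∈ ℝ^{3×3} and vectors t₁, t₂ ∈ ℝ³, define the transformed point clouds (g₁X) i = r₁ (X i) + t₁ and (g₂Y) i = r₂ (Y i) + t₂. Then the correlation matrix satisfies R(g₁X, g₂Y) = r₂ · R(X,Y) · r₁ᵀ. -/
open Matrix

/-- The mean of a point cloud `X : Fin N → ℝ³`. -/
noncomputable def pcMean {N : ℕ} (X : Fin N → Fin 3 → ℝ) : Fin 3 → ℝ :=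
  (N : ℝ)⁻¹ • ∑ i, X i

/-- The correlation matrix `R(X,Y) = ∑ i, (Y i − m(Y)) (X i − m(X))ᵀ`. -/
noncomputable def corrMat {N : ℕ} (X Y : Fin N → Fin 3 → ℝ) : Matrix (Fin 3) (Fin 3) ℝ :=
  ∑ i, vecMulVec (Y i - pcMean Y) (X i - pcMean X)

lemma pcMean_affine {N : ℕ} (hN : 1 ≤ N) (X : Fin N → Fin 3 → ℝ)
    (r : Matrix (Fin 3) (Fin 3) ℝ) (t : Fin 3 → ℝ) :
    pcMean (fun i => r.mulVec (X i) + t) = r.mulVec (pcMean X) + t := by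
  have hN' : (N : ℝ) ≠ 0 := Nat.cast_ne_zero.mpr (by omega)
  unfold pcMean
  rw [Finset.sum_add_distrib, Finset.sum_const, smul_add, mulVec_smul]
  congr 1
  · congr 1
    ext j
    simp [mulVec, dotProduct, Finset.mul_sum, Finset.sum_apply]
    rw [Finset.sum_comm]
  · simp [Finset.card_univ, ← Nat.cast_smul_eq_nsmul ℝ, smul_smul, inv_mul_cancel₀ hN']

lemma vecMulVec_mulVec (a b : Fin 3 → ℝ) (r₁ r₂ : Matrix (Fin 3) (Fin 3) ℝ) :
    vecMulVec (r₂.mulVec a) (r₁.mulVec b) = r₂ * vecMulVec a b * r₁ᵀ := by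
  ext i j
  simp [vecMulVec, mul_apply, mulVec, dotProduct, Finset.mul_sum, Finset.sum_mul]
  congr 1; ext k; congr 1; ext l; ring

/-- Rigidly perturbing the point clouds by `(r₁,t₁)` and `(r₂,t₂)`
transforms the correlation matrix as `R(g₁X, g₂Y) = r₂ · R(X,Y) · r₁ᵀ`. -/
theorem corrMat_bi_equivariant {N : ℕ} (hN : 1 ≤ N) (X Y : Fin N → Fin 3 → ℝ)
    (r₁ r₂ : Matrix (Fin 3) (Fin 3) ℝ) (t₁ t₂ : Fin 3 → ℝ) :
    corrMat (fun i => r₁.mulVec (X i) + t₁) (fun i => r₂.mulVec (Y i) + t₂)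
      = r₂ * corrMat X Y * r₁ᵀ := by
  unfold corrMat
  rw [pcMean_affine hN X r₁ t₁, pcMean_affine hN Y r₂ t₂, Finset.mul_sum, Finset.sum_mul]
  congr 1; ext i
  simp only
  have h1 : r₁.mulVec (X i) + t₁ - (r₁.mulVec (pcMean X) + t₁)
      = r₁.mulVec (X i - pcMean X) := by
    rw [mulVec_sub]; abel
  have h2 : r₂.mulVec (Y i) + t₂ - (r₂.mulVec (pcMean Y) + t₂)
      = r₂.mulVec (Y i - pcMean Y) := by
    rw [mulVec_sub]; abel
  rw [h1, h2, vecMulVec_mulVec]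
end

section
/- (Uniqueness of the sign-corrected SVD projection.) Let A ∈ ℝ^{3×3} and suppose A = U Σ Vᵀ = Ũ Σ Ṽᵀ are two O(3)-SVDs of A with the same Σ = diag(σ₁,σ₂,σ₃) satisfying σ₁ ≥ σ₂ > σ₃ ≥ 0. Then the two sign-corrected projections coincide: U · diag(1,1, det(U Vᵀ)) · Vᵀ = Ũ · diag(1,1, det(Ũ Ṽᵀ)) · Ṽᵀ. -/
open Matrix

/-- `U` is a 3×3 real orthogonal matrix (an element of O(3)). -/
def IsOrtho3 (U : Matrix (Fin 3) (Fin 3) ℝ) : Prop := Uᵀ * U = 1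

/-- The sign-corrected SVD projection `Proj(U,V) = U · diag(1,1, det(U Vᵀ)) · Vᵀ`. -/
noncomputable def svdProj (U V : Matrix (Fin 3) (Fin 3) ℝ) : Matrix (Fin 3) (Fin 3) ℝ :=
  U * diagonal ![1, 1, (U * Vᵀ).det] * Vᵀ

private lemma mul_pos_cancel3 {x c : ℝ} (hc : 0 < c) (h : x * c = 0) : x = 0 :=
  (mul_eq_zero.mp h).resolve_right (ne_of_gt hc)

/-- Uniqueness of the sign-corrected SVD projection. If
`A = U Σ Vᵀ = Ũ Σ Ṽᵀ` are two O(3)-SVDs with the same `Σ = diag(σ₁,σ₂,σ₃)` and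
`σ₁ ≥ σ₂ > σ₃ ≥ 0`, then the sign-corrected projections coincide. -/
theorem svdProj_unique (A U V U' V' : Matrix (Fin 3) (Fin 3) ℝ) (σ₁ σ₂ σ₃ : ℝ)
    (hU : IsOrtho3 U) (hV : IsOrtho3 V) (hU' : IsOrtho3 U') (hV' : IsOrtho3 V')
    (h12 : σ₁ ≥ σ₂) (h23 : σ₂ > σ₃) (h3 : σ₃ ≥ 0)
    (hA : A = U * diagonal ![σ₁, σ₂, σ₃] * Vᵀ)
    (hA' : A = U' * diagonal ![σ₁, σ₂, σ₃] * V'ᵀ) :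
    svdProj U V = svdProj U' V' := by
  have hU1 : Uᵀ * U = 1 := hU
  have hV1 : Vᵀ * V = 1 := hV
  have hU'1 : U'ᵀ * U' = 1 := hU'
  have hV'1 : V'ᵀ * V' = 1 := hV'
  have hU2 : U * Uᵀ = 1 := mul_eq_one_comm.mp hU1
  have hV2 : V * Vᵀ = 1 := mul_eq_one_comm.mp hV1
  have hU'2 : U' * U'ᵀ = 1 := mul_eq_one_comm.mp hU'1
  have hV'2 : V' * V'ᵀ = 1 := mul_eq_one_comm.mp hV'1
  have hσ2 : 0 < σ₂ := lt_of_le_of_lt h3 h23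
  have hσ1 : 0 < σ₁ := lt_of_lt_of_le hσ2 h12
  set s : Fin 3 → ℝ := ![σ₁, σ₂, σ₃] with hs
  set P : Matrix (Fin 3) (Fin 3) ℝ := U'ᵀ * U with hPdef
  set Q : Matrix (Fin 3) (Fin 3) ℝ := V'ᵀ * V with hQdef
  have key : U * diagonal s * Vᵀ = U' * diagonal s * V'ᵀ := by rw [← hA, ← hA']
  have keyT : V * diagonal s * Uᵀ = V' * diagonal s * U'ᵀ := by
    have := congrArg Matrix.transpose key
    simpa [Matrix.transpose_mul, Matrix.transpose_transpose, Matrix.diagonal_transpose,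
      Matrix.mul_assoc] using this
  have hPQ : P * diagonal s = diagonal s * Q := by
    have h1 : U'ᵀ * (U * diagonal s * Vᵀ) * V = P * diagonal s := by
      simp only [hPdef, Matrix.mul_assoc, hV1, Matrix.mul_one]
    have h2 : U'ᵀ * (U' * diagonal s * V'ᵀ) * V = diagonal s * Q := by
      simp only [hQdef, Matrix.mul_assoc]
      rw [← Matrix.mul_assoc U'ᵀ U', hU'1, Matrix.one_mul]
    rw [← h1, ← h2, key]
  have hQP : Q * diagonal s = diagonal s * P := by
    have h1 : V'ᵀ * (V * diagonal s * Uᵀ) * U = Q * diagonal s := by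
      simp only [hQdef, Matrix.mul_assoc, hU1, Matrix.mul_one]
    have h2 : V'ᵀ * (V' * diagonal s * U'ᵀ) * U = diagonal s * P := by
      simp only [hPdef, Matrix.mul_assoc]
      rw [← Matrix.mul_assoc V'ᵀ V', hV'1, Matrix.one_mul]
    rw [← h1, ← h2, keyT]
  have e1 : ∀ i j, P i j * s j = s i * Q i j := by
    intro i j
    have := congrFun (congrFun hPQ i) j
    simpa [Matrix.mul_diagonal, Matrix.diagonal_mul] using this
  have e2 : ∀ i j, Q i j * s j = s i * P i j := by
    intro i j
    have := congrFun (congrFun hQP i) j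
    simpa [Matrix.mul_diagonal, Matrix.diagonal_mul] using this
  -- reduce the vector applications
  have s0 : s 0 = σ₁ := rfl
  have s1 : s 1 = σ₂ := rfl
  have s2 : s 2 = σ₃ := rfl
  have c13 : (0:ℝ) < (σ₁ + σ₃) * (σ₁ - σ₃) := mul_pos (by linarith) (by linarith)
  have c23 : (0:ℝ) < (σ₂ + σ₃) * (σ₂ - σ₃) := mul_pos (by linarith) (by linarith)
  -- vanishing off-block entries of P
  have hP02 : P 0 2 = 0 := by
    have a := e1 0 2; have b := e2 0 2
    rw [s0, s2] at a b
    exact mul_pos_cancel3 c13 (by linear_combination (-σ₃) * a + (-σ₁) * b)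
  have hP12 : P 1 2 = 0 := by
    have a := e1 1 2; have b := e2 1 2
    rw [s1, s2] at a b
    exact mul_pos_cancel3 c23 (by linear_combination (-σ₃) * a + (-σ₂) * b)
  have hP20 : P 2 0 = 0 := by
    have a := e1 2 0; have b := e2 2 0
    rw [s0, s2] at a b
    exact mul_pos_cancel3 c13 (by linear_combination σ₁ * a + σ₃ * b)
  have hP21 : P 2 1 = 0 := by
    have a := e1 2 1; have b := e2 2 1
    rw [s1, s2] at a b
    exact mul_pos_cancel3 c23 (by linear_combination σ₂ * a + σ₃ * b)
  -- vanishing off-block entries of Q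
  have hQ02 : Q 0 2 = 0 := by
    have a := e1 0 2; have b := e2 0 2
    rw [s0, s2] at a b
    exact mul_pos_cancel3 c13 (by linear_combination (-σ₃) * b + (-σ₁) * a)
  have hQ12 : Q 1 2 = 0 := by
    have a := e1 1 2; have b := e2 1 2
    rw [s1, s2] at a b
    exact mul_pos_cancel3 c23 (by linear_combination (-σ₃) * b + (-σ₂) * a)
  have hQ20 : Q 2 0 = 0 := by
    have a := e1 2 0; have b := e2 2 0
    rw [s0, s2] at a b
    exact mul_pos_cancel3 c13 (by linear_combination σ₁ * b + σ₃ * a)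
  have hQ21 : Q 2 1 = 0 := by
    have a := e1 2 1; have b := e2 2 1
    rw [s1, s2] at a b
    exact mul_pos_cancel3 c23 (by linear_combination σ₂ * b + σ₃ * a)
  -- top blocks agree
  have hQP00 : Q 0 0 = P 0 0 := by
    have a := e1 0 0; have b := e2 0 0
    rw [s0] at a b
    have := mul_pos_cancel3 (show (0:ℝ) < σ₁ + σ₁ by linarith)
      (show (Q 0 0 - P 0 0) * (σ₁ + σ₁) = 0 by linear_combination b - a)
    linarith [this]
  have hQP01 : Q 0 1 = P 0 1 := by
    have a := e1 0 1; have b := e2 0 1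
    rw [s0, s1] at a b
    have := mul_pos_cancel3 (show (0:ℝ) < σ₁ + σ₂ by linarith)
      (show (Q 0 1 - P 0 1) * (σ₁ + σ₂) = 0 by linear_combination b - a)
    linarith [this]
  have hQP10 : Q 1 0 = P 1 0 := by
    have a := e1 1 0; have b := e2 1 0
    rw [s0, s1] at a b
    have := mul_pos_cancel3 (show (0:ℝ) < σ₁ + σ₂ by linarith)
      (show (Q 1 0 - P 1 0) * (σ₁ + σ₂) = 0 by linear_combination b - a)
    linarith [this]
  have hQP11 : Q 1 1 = P 1 1 := by
    have a := e1 1 1; have b := e2 1 1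
    rw [s1] at a b
    have := mul_pos_cancel3 (show (0:ℝ) < σ₂ + σ₂ by linarith)
      (show (Q 1 1 - P 1 1) * (σ₂ + σ₂) = 0 by linear_combination b - a)
    linarith [this]
  -- orthogonality of P
  have hPo : P * Pᵀ = 1 := by
    rw [hPdef, Matrix.transpose_mul, Matrix.transpose_transpose]
    calc U'ᵀ * U * (Uᵀ * U') = U'ᵀ * (U * Uᵀ) * U' := by
          simp only [Matrix.mul_assoc]
      _ = 1 := by rw [hU2, Matrix.mul_one, hU'1]
  have rowP : ∀ i j, P i 0 * P j 0 + P i 1 * P j 1 + P i 2 * P j 2 =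
      (if i = j then (1:ℝ) else 0) := by
    intro i j
    have := congrFun (congrFun hPo i) j
    simpa [Matrix.mul_apply, Fin.sum_univ_three, Matrix.transpose_apply,
      Matrix.one_apply] using this
  have r00 : P 0 0 ^ 2 + P 0 1 ^ 2 = 1 := by
    have h := rowP 0 0; simp at h
    linear_combination h - P 0 2 * hP02
  have r11 : P 1 0 ^ 2 + P 1 1 ^ 2 = 1 := by
    have h := rowP 1 1; simp at h
    linear_combination h - P 1 2 * hP12
  have r01 : P 0 0 * P 1 0 + P 0 1 * P 1 1 = 0 := by
    have h := rowP 0 1; simp at h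
    linear_combination h - P 0 2 * hP12
  have hdB : (P 0 0 * P 1 1 - P 0 1 * P 1 0) ^ 2 = 1 := by
    linear_combination (P 1 0 ^ 2 + P 1 1 ^ 2) * r00 + r11
      - (P 0 0 * P 1 0 + P 0 1 * P 1 1) * r01
  -- determinants
  have hdetP : P.det = U'.det * U.det := by
    rw [hPdef, Matrix.det_mul, Matrix.det_transpose]
  have hdetQ : Q.det = V'.det * V.det := by
    rw [hQdef, Matrix.det_mul, Matrix.det_transpose]
  have hdetU : U.det * U.det = 1 := by
    have := congrArg Matrix.det hU1
    simpa [Matrix.det_mul, Matrix.det_transpose] using this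
  have hdetV : V.det * V.det = 1 := by
    have := congrArg Matrix.det hV1
    simpa [Matrix.det_mul, Matrix.det_transpose] using this
  have hε : (U * Vᵀ).det = U.det * V.det := by
    rw [Matrix.det_mul, Matrix.det_transpose]
  have hε' : (U' * V'ᵀ).det = U'.det * V'.det := by
    rw [Matrix.det_mul, Matrix.det_transpose]
  have hεsq : (U * Vᵀ).det * (U * Vᵀ).det = 1 := by
    rw [hε]; linear_combination V.det * V.det * hdetU + hdetV
  have hdetPe : P.det = (P 0 0 * P 1 1 - P 0 1 * P 1 0) * P 2 2 := by
    rw [Matrix.det_fin_three, hP02, hP12, hP20, hP21]; ring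
  have hdetQe : Q.det = (P 0 0 * P 1 1 - P 0 1 * P 1 0) * Q 2 2 := by
    rw [Matrix.det_fin_three, hQ02, hQ12, hQ20, hQ21, hQP00, hQP01, hQP10, hQP11]; ring
  have hprod : P.det * Q.det = (U * Vᵀ).det * (U' * V'ᵀ).det := by
    rw [hdetP, hdetQ, hε, hε']; ring
  have hpq : P 2 2 * Q 2 2 = (U * Vᵀ).det * (U' * V'ᵀ).det := by
    have h := hprod
    rw [hdetPe, hdetQe] at h
    linear_combination h - P 2 2 * Q 2 2 * hdB
  have hsign : P 2 2 * (U * Vᵀ).det * Q 2 2 = (U' * V'ᵀ).det := by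
    linear_combination (U * Vᵀ).det * hpq + (U' * V'ᵀ).det * hεsq
  -- the middle identity
  have hD : P * diagonal ![1, 1, (U * Vᵀ).det] * Qᵀ = diagonal ![1, 1, (U' * V'ᵀ).det] := by
    ext i j
    fin_cases i <;> fin_cases j <;>
      simp [Matrix.mul_apply, Fin.sum_univ_three, Matrix.transpose_apply,
        Matrix.diagonal, Matrix.one_apply]
    · rw [hQP00, hQP01, hP02]; linear_combination r00
    · rw [hQP10, hQP11, hP02]; linear_combination r01
    · rw [hQ20, hQ21, hP02]; ring
    · rw [hQP00, hQP01, hP12]; linear_combination r01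
    · rw [hQP10, hQP11, hP12]; linear_combination r11
    · rw [hQ20, hQ21, hP12]; ring
    · rw [hP20, hP21, hQ02]; ring
    · rw [hP20, hP21, hQ12]; ring
    · rw [hP20, hP21]; linear_combination hsign - P 2 2 * Q 2 2 * hε + hε'
  -- assemble
  have hU'P : U' * P = U := by
    rw [hPdef, ← Matrix.mul_assoc, hU'2, Matrix.one_mul]
  have hQV : Qᵀ * V'ᵀ = Vᵀ := by
    rw [hQdef, Matrix.transpose_mul, Matrix.transpose_transpose,
      Matrix.mul_assoc, hV'2, Matrix.mul_one]
  show U * diagonal ![1, 1, (U * Vᵀ).det] * Vᵀ = U' * diagonal ![1, 1, (U' * V'ᵀ).det] * V'ᵀ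
  calc U * diagonal ![1, 1, (U * Vᵀ).det] * Vᵀ
      = (U' * P) * diagonal ![1, 1, (U * Vᵀ).det] * (Qᵀ * V'ᵀ) := by rw [hU'P, hQV]
    _ = U' * (P * diagonal ![1, 1, (U * Vᵀ).det] * Qᵀ) * V'ᵀ := by
        simp only [Matrix.mul_assoc]
    _ = U' * diagonal ![1, 1, (U' * V'ᵀ).det] * V'ᵀ := by rw [hD]
end

section
/- (Intermediate claim in the uniqueness proof.) Let A ∈ ℝ^{3×3} and suppose A = U Σ Vᵀ = Ũ Σ Ṽᵀ are two O(3)-SVDs of A with the same Σ = diag(σ₁,σ₂,σ₃) satisfying σ₁ ≥ σ₂ > σ₃ ≥ 0. Then the sum of the first two rank-one pieces is unique: U₁V₁ᵀ + U₂V₂ᵀ = Ũ₁Ṽ₁ᵀ + Ũ₂Ṽ₂ᵀ, where Mⱼ denotes the j-th column of a matrix M. -/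
open Matrix

private lemma cancel3 {Q : Matrix (Fin 3) (Fin 3) ℝ} {R : Matrix (Fin 3) (Fin 3) ℝ}
    (h : Q * R = 1) (X : Matrix (Fin 3) (Fin 3) ℝ) : Q * (R * X) = X := by
  rw [← Matrix.mul_assoc, h, Matrix.one_mul]

/-- Intermediate claim in the uniqueness proof. If
`A = U Σ Vᵀ = Ũ Σ Ṽᵀ` are two O(3)-SVDs with the same `Σ = diag(σ₁,σ₂,σ₃)` and
`σ₁ ≥ σ₂ > σ₃ ≥ 0`, then the sum of the first two rank-one pieces is unique:
`U₁V₁ᵀ + U₂V₂ᵀ = Ũ₁Ṽ₁ᵀ + Ũ₂Ṽ₂ᵀ`. (Column `j` of `M` is the vector `Mᵀ j`.) -/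
theorem svd_first_two_rank_one_unique (A U V U' V' : Matrix (Fin 3) (Fin 3) ℝ)
    (σ₁ σ₂ σ₃ : ℝ)
    (hU : IsOrtho3 U) (hV : IsOrtho3 V) (hU' : IsOrtho3 U') (hV' : IsOrtho3 V')
    (h12 : σ₁ ≥ σ₂) (h23 : σ₂ > σ₃) (h3 : σ₃ ≥ 0)
    (hA : A = U * diagonal ![σ₁, σ₂, σ₃] * Vᵀ)
    (hA' : A = U' * diagonal ![σ₁, σ₂, σ₃] * V'ᵀ) :
    vecMulVec (Uᵀ 0) (Vᵀ 0) + vecMulVec (Uᵀ 1) (Vᵀ 1)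
      = vecMulVec (U'ᵀ 0) (V'ᵀ 0) + vecMulVec (U'ᵀ 1) (V'ᵀ 1) := by
  obtain ⟨d, hd⟩ : ∃ x : Fin 3 → ℝ, x = ![σ₁, σ₂, σ₃] := ⟨_, rfl⟩
  obtain ⟨S, hS⟩ : ∃ M : Matrix (Fin 3) (Fin 3) ℝ, M = diagonal d := ⟨_, rfl⟩
  rw [show diagonal ![σ₁, σ₂, σ₃] = S by rw [hS, hd]] at hA hA'
  have hU1 : Uᵀ * U = 1 := hU
  have hV1 : Vᵀ * V = 1 := hV
  have hU'1 : U'ᵀ * U' = 1 := hU'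
  have hV'1 : V'ᵀ * V' = 1 := hV'
  have hU2 : U * Uᵀ = 1 := mul_eq_one_comm.mp hU1
  have hV2 : V * Vᵀ = 1 := mul_eq_one_comm.mp hV1
  have hU'2 : U' * U'ᵀ = 1 := mul_eq_one_comm.mp hU'1
  have hV'2 : V' * V'ᵀ = 1 := mul_eq_one_comm.mp hV'1
  obtain ⟨W, hW⟩ : ∃ M : Matrix (Fin 3) (Fin 3) ℝ, M = U'ᵀ * U := ⟨_, rfl⟩
  obtain ⟨Z, hZ⟩ : ∃ M : Matrix (Fin 3) (Fin 3) ℝ, M = V'ᵀ * V := ⟨_, rfl⟩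
  have hEq : U * S * Vᵀ = U' * S * V'ᵀ := hA ▸ hA'
  have hSt : Sᵀ = S := by rw [hS]; exact Matrix.diagonal_transpose d
  have hWZ : W * S = S * Z := by
    have h1 : U'ᵀ * (U * S * Vᵀ) * V = U'ᵀ * (U' * S * V'ᵀ) * V := by rw [hEq]
    simp only [Matrix.mul_assoc] at h1
    rw [cancel3 hU'1, hV1, Matrix.mul_one] at h1
    simp only [hW, hZ, Matrix.mul_assoc]
    exact h1
  have hWo : Wᵀ * W = 1 := by
    simp only [hW, Matrix.transpose_mul, Matrix.transpose_transpose, Matrix.mul_assoc]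
    rw [cancel3 hU'2, hU1]
  have hWo2 : W * Wᵀ = 1 := mul_eq_one_comm.mp hWo
  have hZo : Zᵀ * Z = 1 := by
    simp only [hZ, Matrix.transpose_mul, Matrix.transpose_transpose, Matrix.mul_assoc]
    rw [cancel3 hV'2, hV1]
  have hZo2 : Z * Zᵀ = 1 := mul_eq_one_comm.mp hZo
  -- W commutes with S²
  have hWS2 : W * (S * S) = (S * S) * W := by
    have h1 : (W * S) * (W * S)ᵀ = (S * Z) * (S * Z)ᵀ := by rw [hWZ]
    simp only [Matrix.transpose_mul, hSt, Matrix.mul_assoc] at h1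
    rw [cancel3 hZo2] at h1
    -- h1 : W * (S * (S * Wᵀ)) = S * S
    have h2 : W * (S * (S * Wᵀ)) * W = (S * S) * W := by rw [h1, Matrix.mul_assoc]
    simp only [Matrix.mul_assoc] at h2
    rw [hWo, Matrix.mul_one] at h2
    simpa [Matrix.mul_assoc] using h2
  -- Z commutes with S²
  have hZS2 : Z * (S * S) = (S * S) * Z := by
    have h1 : (W * S)ᵀ * (W * S) = (S * Z)ᵀ * (S * Z) := by rw [hWZ]
    simp only [Matrix.transpose_mul, hSt, Matrix.mul_assoc] at h1
    rw [cancel3 hWo] at h1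
    -- h1 : S * S = Zᵀ * (S * (S * Z))
    have h2 : Z * (S * S) = Z * (Zᵀ * (S * (S * Z))) := by rw [h1]
    rw [cancel3 hZo2] at h2
    simpa [Matrix.mul_assoc] using h2
  -- entrywise facts
  have eW2 : ∀ i j, W i j * (d j * d j) = (d i * d i) * W i j := by
    intro i j
    have h := congrFun (congrFun hWS2 i) j
    simpa [hS, Matrix.diagonal_mul_diagonal, Matrix.mul_diagonal, Matrix.diagonal_mul,
      Pi.mul_apply] using h
  have eZ2 : ∀ i j, Z i j * (d j * d j) = (d i * d i) * Z i j := by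
    intro i j
    have h := congrFun (congrFun hZS2 i) j
    simpa [hS, Matrix.diagonal_mul_diagonal, Matrix.mul_diagonal, Matrix.diagonal_mul,
      Pi.mul_apply] using h
  have eWZ : ∀ i j, W i j * d j = d i * Z i j := by
    intro i j
    have h := congrFun (congrFun hWZ i) j
    simpa [hS, Matrix.mul_diagonal, Matrix.diagonal_mul] using h
  have hσ1 : σ₁ > 0 := lt_of_lt_of_le (lt_of_le_of_lt h3 h23) h12
  have hσ2 : σ₂ > 0 := lt_of_le_of_lt h3 h23
  have d0 : d 0 = σ₁ := by rw [hd]; rfl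
  have d1 : d 1 = σ₂ := by rw [hd]; rfl
  have d2 : d 2 = σ₃ := by rw [hd]; rfl
  obtain ⟨P, hP⟩ : ∃ M : Matrix (Fin 3) (Fin 3) ℝ, M = diagonal ![1,1,0] := ⟨_, rfl⟩
  have hw00 : W 0 0 = Z 0 0 := by
    have h := eWZ 0 0; rw [d0, mul_comm] at h
    exact mul_left_cancel₀ hσ1.ne' h
  have hw11 : W 1 1 = Z 1 1 := by
    have h := eWZ 1 1; rw [d1, mul_comm] at h
    exact mul_left_cancel₀ hσ2.ne' h
  have hzero : ∀ x a b : ℝ, a * a < b * b → x * (a * a) = (b * b) * x → x = 0 := by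
    intro x a b hab h
    have hne : b * b - a * a ≠ 0 := sub_ne_zero.mpr hab.ne'
    have h' : (b * b - a * a) * x = 0 := by linear_combination -h
    exact (mul_eq_zero.mp h').resolve_left hne
  have h31 : σ₃ * σ₃ < σ₁ * σ₁ := mul_self_lt_mul_self h3 (lt_of_lt_of_le h23 h12)
  have h32 : σ₃ * σ₃ < σ₂ * σ₂ := mul_self_lt_mul_self h3 h23
  have hz02 : Z 0 2 = 0 := hzero _ _ _ h31 (by have h := eZ2 0 2; rwa [d0, d2] at h)
  have hz12 : Z 1 2 = 0 := hzero _ _ _ h32 (by have h := eZ2 1 2; rwa [d1, d2] at h)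
  have hw20 : W 2 0 = 0 := by
    have h := eW2 2 0; rw [d0, d2] at h
    exact hzero _ _ _ h31 (by linear_combination -h)
  have hw21 : W 2 1 = 0 := by
    have h := eW2 2 1; rw [d1, d2] at h
    exact hzero _ _ _ h32 (by linear_combination -h)
  have hw01 : W 0 1 = Z 0 1 := by
    have h1 := eWZ 0 1; have h2 := eW2 0 1; have h3' := eZ2 0 1
    rw [d0, d1] at h1 h2 h3'
    rcases eq_or_lt_of_le h12 with h | h
    · rw [← h] at h1; rw [mul_comm] at h1; exact mul_left_cancel₀ hσ2.ne' h1
    · have h21 : σ₂ * σ₂ < σ₁ * σ₁ := mul_self_lt_mul_self hσ2.le h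
      have w0 : W 0 1 = 0 := hzero _ _ _ h21 (by linear_combination h2)
      have z0 : Z 0 1 = 0 := hzero _ _ _ h21 (by linear_combination h3')
      rw [w0, z0]
  have hw10 : W 1 0 = Z 1 0 := by
    have h1 := eWZ 1 0; have h2 := eW2 1 0; have h3' := eZ2 1 0
    rw [d0, d1] at h1 h2 h3'
    rcases eq_or_lt_of_le h12 with h | h
    · rw [← h] at h1; rw [mul_comm] at h1; exact mul_left_cancel₀ hσ2.ne' h1
    · have h21 : σ₂ * σ₂ < σ₁ * σ₁ := mul_self_lt_mul_self hσ2.le h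
      have w0 : W 1 0 = 0 := hzero _ _ _ h21 (by linear_combination -h2)
      have z0 : Z 1 0 = 0 := hzero _ _ _ h21 (by linear_combination -h3')
      rw [w0, z0]
  have hWP : W * P = P * Z := by
    ext i j
    rw [hP, Matrix.mul_diagonal, Matrix.diagonal_mul]
    fin_cases i <;> fin_cases j
    · simpa using hw00
    · simpa using hw01
    · simpa using hz02.symm
    · simpa using hw10
    · simpa using hw11
    · simpa using hz12.symm
    · simpa using hw20
    · simpa using hw21
    · simp
  -- hence U P Vᵀ = U' P V'ᵀ
  have hFinal : U * P * Vᵀ = U' * P * V'ᵀ := by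
    have h1 : U' * (W * P) * Vᵀ = U' * (P * Z) * Vᵀ := by rw [hWP]
    simp only [hW, hZ, Matrix.mul_assoc] at h1
    rw [cancel3 hU'2] at h1
    rw [show V'ᵀ * (V * Vᵀ) = V'ᵀ by rw [hV2, Matrix.mul_one]] at h1
    simpa [Matrix.mul_assoc] using h1
  have lhs : vecMulVec (Uᵀ 0) (Vᵀ 0) + vecMulVec (Uᵀ 1) (Vᵀ 1) = U * P * Vᵀ := by
    ext a b
    simp [Matrix.mul_apply, hP, Matrix.vecMulVec_apply, Fin.sum_univ_three,
      Matrix.diagonal, Matrix.transpose_apply]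
  have rhs : vecMulVec (U'ᵀ 0) (V'ᵀ 0) + vecMulVec (U'ᵀ 1) (V'ᵀ 1) = U' * P * V'ᵀ := by
    ext a b
    simp [Matrix.mul_apply, hP, Matrix.vecMulVec_apply, Fin.sum_univ_three,
      Matrix.diagonal, Matrix.transpose_apply]
  rw [lhs, rhs, hFinal]
end

section
/- (SO(3)-bi-equivariance of the SVD projection.) Let A ∈ ℝ^{3×3}, and let r₁, r₂ ∈ SO(3). Suppose A = U Σ Vᵀ and r₂ A r₁ᵀ = U' Σ V'ᵀ are O(3)-SVDs with the same Σ = diag(σ₁,σ₂,σ₃) satisfying σ₁ ≥ σ₂ > σ₃ ≥ 0. Then the sign-corrected projections satisfy Proj(U',V') = r₂ · Proj(U,V) · r₁ᵀ. -/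
open Matrix

/-- `r` is an element of SO(3): orthogonal with determinant 1. -/
def IsSO3 (r : Matrix (Fin 3) (Fin 3) ℝ) : Prop := rᵀ * r = 1 ∧ r.det = 1

private lemma aux_two_zero {x y a b : ℝ} (ha : 0 < a) (hb : 0 < b)
    (h : x ^ 2 * a + y ^ 2 * b = 0) : x = 0 ∧ y = 0 := by
  constructor
  · have h1 : x ^ 2 = 0 := by nlinarith [sq_nonneg x, sq_nonneg y]
    exact sq_eq_zero_iff.mp h1
  · have h1 : y ^ 2 = 0 := by nlinarith [sq_nonneg x, sq_nonneg y]
    exact sq_eq_zero_iff.mp h1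

private lemma aux_one_zero {x a : ℝ} (ha : 0 < a) (h : x ^ 2 * a = 0) : x = 0 := by
  have h1 : x ^ 2 = 0 := by nlinarith
  exact sq_eq_zero_iff.mp h1

private lemma aux_cancel {a x y : ℝ} (ha : 0 < a) (h : x * a = a * y) : x = y := by
  have h1 : a * (x - y) = 0 := by linear_combination h
  rcases mul_eq_zero.mp h1 with h' | h'
  · exact absurd h' (ne_of_gt ha)
  · linarith

private lemma aux_zero_of_mul {a x : ℝ} (ha : 0 < a) (h : a * x = 0) : x = 0 :=
  (mul_eq_zero.mp h).resolve_left (ne_of_gt ha)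


private lemma aux_pos_sub {a b : ℝ} (hb : 0 ≤ b) (h : b < a) : 0 < a ^ 2 - b ^ 2 := by
  nlinarith

private lemma aux_sum_zero {x y z : ℝ} (h : x * x + y * y + z * z = 1) (hz : z * z = 1) :
    x = 0 ∧ y = 0 := by
  constructor
  · have h1 : x ^ 2 = 0 := by nlinarith [sq_nonneg x, sq_nonneg y]
    exact sq_eq_zero_iff.mp h1
  · have h1 : y ^ 2 = 0 := by nlinarith [sq_nonneg x, sq_nonneg y]
    exact sq_eq_zero_iff.mp h1


set_option maxHeartbeats 1000000 in
/-- SO(3)-bi-equivariance of the SVD projection. If `A = U Σ Vᵀ` and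
`r₂ A r₁ᵀ = U' Σ V'ᵀ` are O(3)-SVDs with the same `Σ = diag(σ₁,σ₂,σ₃)`,
`σ₁ ≥ σ₂ > σ₃ ≥ 0`, and `r₁, r₂ ∈ SO(3)`, then `Proj(U',V') = r₂ · Proj(U,V) · r₁ᵀ`. -/
theorem svdProj_bi_equivariant (A U V U' V' r₁ r₂ : Matrix (Fin 3) (Fin 3) ℝ)
    (σ₁ σ₂ σ₃ : ℝ)
    (hr₁ : IsSO3 r₁) (hr₂ : IsSO3 r₂)
    (hU : IsOrtho3 U) (hV : IsOrtho3 V) (hU' : IsOrtho3 U') (hV' : IsOrtho3 V')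
    (h12 : σ₁ ≥ σ₂) (h23 : σ₂ > σ₃) (h3 : σ₃ ≥ 0)
    (hA : A = U * diagonal ![σ₁, σ₂, σ₃] * Vᵀ)
    (hA' : r₂ * A * r₁ᵀ = U' * diagonal ![σ₁, σ₂, σ₃] * V'ᵀ) :
    svdProj U' V' = r₂ * svdProj U V * r₁ᵀ := by
  obtain ⟨hr₁o, hr₁d⟩ := hr₁
  obtain ⟨hr₂o, hr₂d⟩ := hr₂
  have hUo : Uᵀ * U = 1 := hU
  have hVo : Vᵀ * V = 1 := hV
  have hU'o : U'ᵀ * U' = 1 := hU'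
  have hV'o : V'ᵀ * V' = 1 := hV'
  have hU2 : U * Uᵀ = 1 := mul_eq_one_comm.mp hUo
  have hV2 : V * Vᵀ = 1 := mul_eq_one_comm.mp hVo
  have hU'2 : U' * U'ᵀ = 1 := mul_eq_one_comm.mp hU'o
  have hV'2 : V' * V'ᵀ = 1 := mul_eq_one_comm.mp hV'o
  have hcan : ∀ (X Y Z : Matrix (Fin 3) (Fin 3) ℝ), X * Y = 1 → X * (Y * Z) = Z := by
    intro X Y Z h; rw [← Matrix.mul_assoc, h, Matrix.one_mul]
  set P : Matrix (Fin 3) (Fin 3) ℝ := U'ᵀ * r₂ * U with hPdef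
  set Q : Matrix (Fin 3) (Fin 3) ℝ := V'ᵀ * r₁ * V with hQdef
  have hPo : Pᵀ * P = 1 := by
    rw [hPdef]
    simp only [Matrix.transpose_mul, Matrix.transpose_transpose, Matrix.mul_assoc]
    rw [hcan _ _ _ hU'2, hcan _ _ _ hr₂o]
    exact hUo
  have hQo : Qᵀ * Q = 1 := by
    rw [hQdef]
    simp only [Matrix.transpose_mul, Matrix.transpose_transpose, Matrix.mul_assoc]
    rw [hcan _ _ _ hV'2, hcan _ _ _ hr₁o]
    exact hVo
  have hP2 : P * Pᵀ = 1 := mul_eq_one_comm.mpr hPo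
  have hQ2 : Q * Qᵀ = 1 := mul_eq_one_comm.mpr hQo
  rw [hA] at hA'
  have hPQ : P * diagonal ![σ₁, σ₂, σ₃] = diagonal ![σ₁, σ₂, σ₃] * Q := by
    have h2 := congrArg (fun M => U'ᵀ * M * (r₁ * V)) hA'
    simp only [Matrix.mul_assoc] at h2
    rw [hcan _ _ _ hr₁o] at h2
    rw [hVo, Matrix.mul_one] at h2
    rw [hcan _ _ _ hU'o] at h2
    rw [hPdef, hQdef]
    simp only [Matrix.mul_assoc]
    exact h2
  have key : ∀ i j, P i j * (![σ₁, σ₂, σ₃]) j = (![σ₁, σ₂, σ₃]) i * Q i j := by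
    intro i j
    have := congrFun (congrFun hPQ i) j
    simpa [Matrix.mul_diagonal, Matrix.diagonal_mul] using this
  have prow : ∀ i i', P i 0 * P i' 0 + P i 1 * P i' 1 + P i 2 * P i' 2
      = if i = i' then 1 else 0 := by
    intro i i'
    have := congrFun (congrFun hP2 i) i'
    simpa [Matrix.mul_apply, Fin.sum_univ_three, Matrix.one_apply] using this
  have pcol : ∀ j j', P 0 j * P 0 j' + P 1 j * P 1 j' + P 2 j * P 2 j'
      = if j = j' then 1 else 0 := by
    intro j j'
    have := congrFun (congrFun hPo j) j'
    simpa [Matrix.mul_apply, Fin.sum_univ_three, Matrix.one_apply] using this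
  have qrow : ∀ i i', Q i 0 * Q i' 0 + Q i 1 * Q i' 1 + Q i 2 * Q i' 2
      = if i = i' then 1 else 0 := by
    intro i i'
    have := congrFun (congrFun hQ2 i) i'
    simpa [Matrix.mul_apply, Fin.sum_univ_three, Matrix.one_apply] using this
  have qcol : ∀ j j', Q 0 j * Q 0 j' + Q 1 j * Q 1 j' + Q 2 j * Q 2 j'
      = if j = j' then 1 else 0 := by
    intro j j'
    have := congrFun (congrFun hQo j) j'
    simpa [Matrix.mul_apply, Fin.sum_univ_three, Matrix.one_apply] using this
  have hσ₂ : 0 < σ₂ := lt_of_le_of_lt h3 h23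
  have hσ₁ : 0 < σ₁ := lt_of_lt_of_le hσ₂ h12
  have hs13 : (0:ℝ) < σ₁ ^ 2 - σ₃ ^ 2 := aux_pos_sub h3 (lt_of_lt_of_le h23 h12)
  have hs23 : (0:ℝ) < σ₂ ^ 2 - σ₃ ^ 2 := aux_pos_sub h3 h23
  -- instantiate key
  have k00 := key 0 0; have k01 := key 0 1; have k02 := key 0 2
  have k10 := key 1 0; have k11 := key 1 1; have k12 := key 1 2
  have k20 := key 2 0; have k21 := key 2 1; have k22 := key 2 2
  simp only [Matrix.cons_val_zero, Matrix.cons_val_one, Matrix.head_cons,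
    Matrix.cons_val_two, Matrix.tail_cons] at k00 k01 k02 k10 k11 k12 k20 k21 k22
  have pr00 := prow 0 0; have pr01 := prow 0 1; have pr11 := prow 1 1; have pr22 := prow 2 2
  have pc00 := pcol 0 0; have pc22 := pcol 2 2
  have qr00 := qrow 0 0; have qr22 := qrow 2 2
  have qc00 := qcol 0 0; have qc22 := qcol 2 2
  norm_num at pr00 pr01 pr11 pr22 pc00 pc22 qr00 qr22 qc00 qc22
  clear key prow pcol qrow qcol hPQ hA hA' hcan
  -- squared key relations
  have k00s := congrArg (· ^ 2) k00
  have k01s := congrArg (· ^ 2) k01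
  have k02s := congrArg (· ^ 2) k02
  have k10s := congrArg (· ^ 2) k10
  have k12s := congrArg (· ^ 2) k12
  have k20s := congrArg (· ^ 2) k20
  have k21s := congrArg (· ^ 2) k21
  have k22s := congrArg (· ^ 2) k22
  -- row 2 of P vanishes off the corner
  have hrow2 : P 2 0 ^ 2 * (σ₁ ^ 2 - σ₃ ^ 2) + P 2 1 ^ 2 * (σ₂ ^ 2 - σ₃ ^ 2) = 0 := by
    linear_combination k20s + k21s + k22s - σ₃ ^ 2 * pr22 + σ₃ ^ 2 * qr22
  obtain ⟨hP20, hP21⟩ := aux_two_zero hs13 hs23 hrow2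
  have hP22 : P 2 2 * P 2 2 = 1 := by
    rw [hP20, hP21] at pr22; linear_combination pr22
  -- column 2 of Q vanishes off the corner
  have hcol2 : Q 0 2 ^ 2 * (σ₁ ^ 2 - σ₃ ^ 2) + Q 1 2 ^ 2 * (σ₂ ^ 2 - σ₃ ^ 2) = 0 := by
    linear_combination -(k02s + k12s + k22s) + σ₃ ^ 2 * pc22 - σ₃ ^ 2 * qc22
  obtain ⟨hQ02, hQ12⟩ := aux_two_zero hs13 hs23 hcol2
  have hQ22 : Q 2 2 * Q 2 2 = 1 := by
    rw [hQ02, hQ12] at qc22; linear_combination qc22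
  -- remaining zeros
  obtain ⟨hP02, hP12⟩ := aux_sum_zero pc22 hP22
  obtain ⟨hQ20, hQ21⟩ := aux_sum_zero qr22 hQ22
  -- top-left blocks coincide
  have hE00 : P 0 0 = Q 0 0 := aux_cancel hσ₁ k00
  have hE11 : P 1 1 = Q 1 1 := aux_cancel hσ₂ k11
  have hE01 : P 0 1 = Q 0 1 := by
    rcases eq_or_lt_of_le h12 with hss | hss
    · rw [← hss] at k01; exact aux_cancel hσ₂ k01
    · have h1 : P 0 1 ^ 2 * (σ₁ ^ 2 - σ₂ ^ 2) = 0 := by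
        linear_combination -(k00s + k01s + k02s) + σ₁ ^ 2 * pr00 - σ₁ ^ 2 * qr00
          - (σ₁ ^ 2 - σ₃ ^ 2) * P 0 2 * hP02
      have hP01 : P 0 1 = 0 := aux_one_zero (aux_pos_sub (le_of_lt hσ₂) hss) h1
      have hQ01 : Q 0 1 = 0 := by
        refine aux_zero_of_mul hσ₁ ?_
        rw [← k01, hP01]; ring
      rw [hP01, hQ01]
  have hE10 : P 1 0 = Q 1 0 := by
    rcases eq_or_lt_of_le h12 with hss | hss
    · rw [hss] at k10; exact aux_cancel hσ₁ k10
    · have h1 : Q 1 0 ^ 2 * (σ₁ ^ 2 - σ₂ ^ 2) = 0 := by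
        linear_combination (k00s + k10s + k20s) - σ₁ ^ 2 * pc00 + σ₁ ^ 2 * qc00
          - (σ₁ ^ 2 - σ₃ ^ 2) * Q 2 0 * hQ20
      have hQ10 : Q 1 0 = 0 := aux_one_zero (aux_pos_sub (le_of_lt hσ₂) hss) h1
      have hP10 : P 1 0 = 0 := by
        have h2 : P 1 0 * σ₁ = 0 := by rw [k10, hQ10]; ring
        have h3 : σ₁ * P 1 0 = 0 := by linear_combination h2
        exact aux_zero_of_mul hσ₁ h3
      rw [hP10, hQ10]
  -- determinant bookkeeping
  have hdP : P.det = U'.det * U.det := by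
    rw [hPdef]
    simp [Matrix.det_mul, Matrix.det_transpose, hr₂d]
  have hdQ : Q.det = V'.det * V.det := by
    rw [hQdef]
    simp [Matrix.det_mul, Matrix.det_transpose, hr₁d]
  have hdU : U.det * U.det = 1 := by
    have := congrArg Matrix.det hUo
    simpa [Matrix.det_mul, Matrix.det_transpose] using this
  have hdV : V.det * V.det = 1 := by
    have := congrArg Matrix.det hVo
    simpa [Matrix.det_mul, Matrix.det_transpose] using this
  have hdd : (U' * V'ᵀ).det = (U * Vᵀ).det * (P.det * Q.det) := by
    simp only [Matrix.det_mul, Matrix.det_transpose, hdP, hdQ]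
    linear_combination (-(U'.det * V'.det * (V.det * V.det))) * hdU
      - (U'.det * V'.det) * hdV
  have hdetP3 : P.det = P 2 2 * (P 0 0 * P 1 1 - P 0 1 * P 1 0) := by
    rw [Matrix.det_fin_three, hP02, hP12, hP20, hP21]; ring
  have hdetQ3 : Q.det = Q 2 2 * (Q 0 0 * Q 1 1 - Q 0 1 * Q 1 0) := by
    rw [Matrix.det_fin_three, hQ02, hQ12, hQ20, hQ21]; ring
  have hb : (P 0 0 * P 1 1 - P 0 1 * P 1 0) ^ 2 = 1 := by
    rw [hP02] at pr00 pr01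
    rw [hP12] at pr11 pr01
    linear_combination (P 1 0 * P 1 0 + P 1 1 * P 1 1) * pr00 + pr11
      - (P 0 0 * P 1 0 + P 0 1 * P 1 1) * pr01
  have hPQdet : P.det * Q.det = P 2 2 * Q 2 2 := by
    rw [hdetP3, hdetQ3, ← hE00, ← hE01, ← hE10, ← hE11]
    linear_combination P 2 2 * Q 2 2 * hb
  have hdd2 : (U' * V'ᵀ).det = (U * Vᵀ).det * (P 2 2 * Q 2 2) := by
    rw [hdd, hPQdet]
  -- the central identity
  have hKey : P * diagonal ![1, 1, (U * Vᵀ).det] * Qᵀ = diagonal ![1, 1, (U' * V'ᵀ).det] := by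
    ext i j
    fin_cases i <;> fin_cases j <;>
      simp [Matrix.mul_apply, Matrix.mul_diagonal, Fin.sum_univ_three,
        Matrix.diagonal_apply, hP02, hP12, hP20, hP21, hQ02, hQ12, hQ20, hQ21,
        ← hE00, ← hE01, ← hE10, ← hE11]
    · linear_combination pr00 - P 0 2 * hP02
    · linear_combination pr01 - P 0 2 * hP12
    · linear_combination pr01 - P 0 2 * hP12
    · linear_combination pr11 - P 1 2 * hP12
    · have hdd2' : U'.det * V'.det = U.det * V.det * (P 2 2 * Q 2 2) := by
        simpa [Matrix.det_mul, Matrix.det_transpose] using hdd2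
      linear_combination -hdd2'
  -- assemble
  have hUP : U' * P = r₂ * U := by
    rw [hPdef]
    simp only [← Matrix.mul_assoc]
    rw [hU'2, Matrix.one_mul]
  have hQV : Qᵀ * V'ᵀ = Vᵀ * r₁ᵀ := by
    rw [hQdef]
    simp only [Matrix.transpose_mul, Matrix.transpose_transpose, Matrix.mul_assoc]
    rw [hV'2, Matrix.mul_one]
  show U' * diagonal ![1, 1, (U' * V'ᵀ).det] * V'ᵀ
      = r₂ * (U * diagonal ![1, 1, (U * Vᵀ).det] * Vᵀ) * r₁ᵀ
  calc U' * diagonal ![1, 1, (U' * V'ᵀ).det] * V'ᵀ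
      = U' * (P * diagonal ![1, 1, (U * Vᵀ).det] * Qᵀ) * V'ᵀ := by rw [hKey]
    _ = (U' * P) * diagonal ![1, 1, (U * Vᵀ).det] * (Qᵀ * V'ᵀ) := by
        simp only [Matrix.mul_assoc]
    _ = (r₂ * U) * diagonal ![1, 1, (U * Vᵀ).det] * (Vᵀ * r₁ᵀ) := by rw [hUP, hQV]
    _ = r₂ * (U * diagonal ![1, 1, (U * Vᵀ).det] * Vᵀ) * r₁ᵀ := by
        simp only [Matrix.mul_assoc]
end

section
/- (Transpose equivariance of the SVD projection.) Let A ∈ ℝ^{3×3}. Suppose A = U Σ Vᵀ and Aᵀ = U' Σ V'ᵀ are O(3)-SVDs with the same Σ = diag(σ₁,σ₂,σ₃) satisfying σ₁ ≥ σ₂ > σ₃ ≥ 0. Then Proj(U',V') = (Proj(U,V))ᵀ. -/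
open Matrix

set_option maxHeartbeats 1000000

private lemma zcancel {c x : ℝ} (hc : c ≠ 0) (h : c * x = 0) : x = 0 :=
  (mul_eq_zero.mp h).resolve_left hc

lemma key (U V U' V' : Matrix (Fin 3) (Fin 3) ℝ) (σ₁ σ₂ σ₃ : ℝ)
    (hU : IsOrtho3 U) (hV : IsOrtho3 V) (hU' : IsOrtho3 U') (hV' : IsOrtho3 V')
    (h12 : σ₁ ≥ σ₂) (h23 : σ₂ > σ₃) (h3 : σ₃ ≥ 0)
    (heq : U * diagonal ![σ₁, σ₂, σ₃] * Vᵀ = U' * diagonal ![σ₁, σ₂, σ₃] * V'ᵀ) :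
    svdProj U V = svdProj U' V' := by
  have hσ2 : (0:ℝ) < σ₂ := lt_of_le_of_lt h3 h23
  have hσ1 : (0:ℝ) < σ₁ := lt_of_lt_of_le hσ2 h12
  have hUo : U * Uᵀ = 1 := mul_eq_one_comm.mp hU
  have hVo : V * Vᵀ = 1 := mul_eq_one_comm.mp hV
  have hU'o : U' * U'ᵀ = 1 := mul_eq_one_comm.mp hU'
  have hV'o : V' * V'ᵀ = 1 := mul_eq_one_comm.mp hV'
  set s : Fin 3 → ℝ := ![σ₁, σ₂, σ₃] with hs
  set P : Matrix (Fin 3) (Fin 3) ℝ := Uᵀ * U' with hP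
  set Q : Matrix (Fin 3) (Fin 3) ℝ := Vᵀ * V' with hQ
  have h1 : diagonal s * Q = P * diagonal s := by
    have := congrArg (fun M => Uᵀ * M * V') heq
    simp only [Matrix.mul_assoc] at this
    rw [← Matrix.mul_assoc Uᵀ U, hU, one_mul] at this
    rw [hP, hQ]
    simp only [Matrix.mul_assoc]
    rw [this, hV', Matrix.mul_one]
  have h2 : diagonal s * P = Q * diagonal s := by
    have heqT := congrArg Matrix.transpose heq
    simp only [Matrix.transpose_mul, Matrix.transpose_transpose, Matrix.diagonal_transpose] at heqT
    have := congrArg (fun M => Vᵀ * M * U') heqT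
    simp only [Matrix.mul_assoc] at this
    rw [← Matrix.mul_assoc Vᵀ V, hV, one_mul] at this
    rw [hP, hQ]
    simp only [Matrix.mul_assoc]
    rw [this, hU', Matrix.mul_one]
  have hPQ : ∀ i j, s i * Q i j = P i j * s j := by
    intro i j
    have := congrFun (congrFun h1 i) j
    simpa [Matrix.diagonal_mul, Matrix.mul_diagonal] using this
  have hQP : ∀ i j, s i * P i j = Q i j * s j := by
    intro i j
    have := congrFun (congrFun h2 i) j
    simpa [Matrix.diagonal_mul, Matrix.mul_diagonal] using this
  -- orthogonality of P and Q
  have hPtP : Pᵀ * P = 1 := by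
    rw [hP, Matrix.transpose_mul, Matrix.transpose_transpose]
    calc U'ᵀ * U * (Uᵀ * U') = U'ᵀ * (U * Uᵀ) * U' := by simp [Matrix.mul_assoc]
      _ = U'ᵀ * U' := by rw [hUo, Matrix.mul_one]
      _ = 1 := hU'
  have hQtQ : Qᵀ * Q = 1 := by
    rw [hQ, Matrix.transpose_mul, Matrix.transpose_transpose]
    calc V'ᵀ * V * (Vᵀ * V') = V'ᵀ * (V * Vᵀ) * V' := by simp [Matrix.mul_assoc]
      _ = V'ᵀ * V' := by rw [hVo, Matrix.mul_one]
      _ = 1 := hV'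
  have hPPt : P * Pᵀ = 1 := mul_eq_one_comm.mp hPtP
  have hQQt : Q * Qᵀ = 1 := mul_eq_one_comm.mp hQtQ
  have colP : ∀ i j, P 0 i * P 0 j + P 1 i * P 1 j + P 2 i * P 2 j = if i = j then 1 else 0 := by
    intro i j
    have := congrFun (congrFun hPtP i) j
    simpa [Matrix.mul_apply, Fin.sum_univ_three, Matrix.one_apply] using this
  have rowP : ∀ i j, P i 0 * P j 0 + P i 1 * P j 1 + P i 2 * P j 2 = if i = j then 1 else 0 := by
    intro i j
    have := congrFun (congrFun hPPt i) j
    simpa [Matrix.mul_apply, Fin.sum_univ_three, Matrix.one_apply] using this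
  have colQ : ∀ i j, Q 0 i * Q 0 j + Q 1 i * Q 1 j + Q 2 i * Q 2 j = if i = j then 1 else 0 := by
    intro i j
    have := congrFun (congrFun hQtQ i) j
    simpa [Matrix.mul_apply, Fin.sum_univ_three, Matrix.one_apply] using this
  -- scalar entry equations
  have a02 : σ₁ * Q 0 2 = P 0 2 * σ₃ := by simpa [hs] using hPQ 0 2
  have b02 : σ₁ * P 0 2 = Q 0 2 * σ₃ := by simpa [hs] using hQP 0 2
  have a12 : σ₂ * Q 1 2 = P 1 2 * σ₃ := by simpa [hs] using hPQ 1 2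
  have b12 : σ₂ * P 1 2 = Q 1 2 * σ₃ := by simpa [hs] using hQP 1 2
  have a20 : σ₃ * Q 2 0 = P 2 0 * σ₁ := by simpa [hs] using hPQ 2 0
  have b20 : σ₃ * P 2 0 = Q 2 0 * σ₁ := by simpa [hs] using hQP 2 0
  have a21 : σ₃ * Q 2 1 = P 2 1 * σ₂ := by simpa [hs] using hPQ 2 1
  have b21 : σ₃ * P 2 1 = Q 2 1 * σ₂ := by simpa [hs] using hQP 2 1
  have a00 : σ₁ * Q 0 0 = P 0 0 * σ₁ := by simpa [hs] using hPQ 0 0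
  have b00 : σ₁ * P 0 0 = Q 0 0 * σ₁ := by simpa [hs] using hQP 0 0
  have a01 : σ₁ * Q 0 1 = P 0 1 * σ₂ := by simpa [hs] using hPQ 0 1
  have b01 : σ₁ * P 0 1 = Q 0 1 * σ₂ := by simpa [hs] using hQP 0 1
  have a10 : σ₂ * Q 1 0 = P 1 0 * σ₁ := by simpa [hs] using hPQ 1 0
  have b10 : σ₂ * P 1 0 = Q 1 0 * σ₁ := by simpa [hs] using hQP 1 0
  have a11 : σ₂ * Q 1 1 = P 1 1 * σ₂ := by simpa [hs] using hPQ 1 1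
  have b11 : σ₂ * P 1 1 = Q 1 1 * σ₂ := by simpa [hs] using hQP 1 1
  -- zeros
  have hne02 : σ₁ ^ 2 - σ₃ ^ 2 ≠ 0 := by nlinarith
  have hne12 : σ₂ ^ 2 - σ₃ ^ 2 ≠ 0 := by nlinarith
  have zP02 : P 0 2 = 0 := zcancel hne02 (by linear_combination σ₁ * b02 + σ₃ * a02)
  have zP12 : P 1 2 = 0 := zcancel hne12 (by linear_combination σ₂ * b12 + σ₃ * a12)
  have zP20 : P 2 0 = 0 := zcancel (by nlinarith : σ₃ ^ 2 - σ₁ ^ 2 ≠ 0)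
    (by linear_combination σ₃ * b20 + σ₁ * a20)
  have zP21 : P 2 1 = 0 := zcancel (by nlinarith : σ₃ ^ 2 - σ₂ ^ 2 ≠ 0)
    (by linear_combination σ₃ * b21 + σ₂ * a21)
  have zQ02 : Q 0 2 = 0 := zcancel hne02 (by linear_combination σ₁ * a02 + σ₃ * b02)
  have zQ12 : Q 1 2 = 0 := zcancel hne12 (by linear_combination σ₂ * a12 + σ₃ * b12)
  have zQ20 : Q 2 0 = 0 := zcancel (by nlinarith : σ₃ ^ 2 - σ₁ ^ 2 ≠ 0)
    (by linear_combination σ₃ * a20 + σ₁ * b20)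
  have zQ21 : Q 2 1 = 0 := zcancel (by nlinarith : σ₃ ^ 2 - σ₂ ^ 2 ≠ 0)
    (by linear_combination σ₃ * a21 + σ₂ * b21)
  -- top-block equalities
  have eq00 : Q 0 0 = P 0 0 := by
    have := zcancel (by positivity : (σ₁ + σ₁) ≠ 0)
      (show (σ₁ + σ₁) * (Q 0 0 - P 0 0) = 0 by linear_combination a00 - b00)
    linarith
  have eq01 : Q 0 1 = P 0 1 := by
    have := zcancel (by positivity : (σ₁ + σ₂) ≠ 0)
      (show (σ₁ + σ₂) * (Q 0 1 - P 0 1) = 0 by linear_combination a01 - b01)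
    linarith
  have eq10 : Q 1 0 = P 1 0 := by
    have := zcancel (by positivity : (σ₂ + σ₁) ≠ 0)
      (show (σ₂ + σ₁) * (Q 1 0 - P 1 0) = 0 by linear_combination a10 - b10)
    linarith
  have eq11 : Q 1 1 = P 1 1 := by
    have := zcancel (by positivity : (σ₂ + σ₂) ≠ 0)
      (show (σ₂ + σ₂) * (Q 1 1 - P 1 1) = 0 by linear_combination a11 - b11)
    linarith
  -- squares
  have hP22 : P 2 2 ^ 2 = 1 := by
    have h := colP 2 2
    rw [zP02, zP12] at h; simp at h; linear_combination h
  have hQ22 : Q 2 2 ^ 2 = 1 := by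
    have h := colQ 2 2
    rw [zQ02, zQ12] at h; simp at h; linear_combination h
  have hb : (P 0 0 * P 1 1 - P 0 1 * P 1 0) ^ 2 = 1 := by
    have c00 := colP 0 0; have c11 := colP 1 1; have c01 := colP 0 1
    rw [zP20] at c00 c01
    rw [zP21] at c11 c01
    norm_num at c00 c11 c01
    linear_combination (P 0 1 ^ 2 + P 1 1 ^ 2) * c00 + c11
      - (P 0 0 * P 0 1 + P 1 0 * P 1 1) * c01
  -- cleaned row facts
  have r00 : P 0 0 * P 0 0 + P 0 1 * P 0 1 = 1 := by
    have h := rowP 0 0; rw [zP02] at h; norm_num at h; linarith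
  have r01 : P 0 0 * P 1 0 + P 0 1 * P 1 1 = 0 := by
    have h := rowP 0 1; rw [zP02] at h; norm_num at h; linarith
  have r11 : P 1 0 * P 1 0 + P 1 1 * P 1 1 = 1 := by
    have h := rowP 1 1; rw [zP12] at h; norm_num at h; linarith
  -- assemble
  have hU'eq : U' = U * P := by rw [hP, ← Matrix.mul_assoc, hUo, one_mul]
  have hV'eq : V' = V * Q := by rw [hQ, ← Matrix.mul_assoc, hVo, one_mul]
  have hdP : P.det = P 2 2 * (P 0 0 * P 1 1 - P 0 1 * P 1 0) := by
    rw [Matrix.det_fin_three, zP02, zP12, zP20, zP21]; ring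
  have hdQ : Q.det = Q 2 2 * (P 0 0 * P 1 1 - P 0 1 * P 1 0) := by
    rw [Matrix.det_fin_three, zQ02, zQ12, zQ20, zQ21, eq00, eq01, eq10, eq11]; ring
  have hdet' : (U' * V'ᵀ).det = (U * Vᵀ).det * P.det * Q.det := by
    rw [hU'eq, hV'eq]
    simp only [Matrix.transpose_mul, Matrix.det_mul, Matrix.det_transpose]
    ring
  have he : (U' * V'ᵀ).det
      = (U * Vᵀ).det * (P 2 2 * (P 0 0 * P 1 1 - P 0 1 * P 1 0))
        * (Q 2 2 * (P 0 0 * P 1 1 - P 0 1 * P 1 0)) := by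
    rw [hdet', hdP, hdQ]
  have hmid : P * diagonal ![1, 1, (U' * V'ᵀ).det] * Qᵀ = diagonal ![1, 1, (U * Vᵀ).det] := by
    ext i j
    fin_cases i <;> fin_cases j <;>
      simp [Matrix.mul_apply, Fin.sum_univ_three, Matrix.mul_diagonal, Matrix.transpose_apply,
        Matrix.diagonal_apply, he, zP02, zP12, zP20, zP21, zQ02, zQ12, zQ20, zQ21,
        eq00, eq01, eq10, eq11]
    all_goals try linear_combination r00
    all_goals try linear_combination r01
    all_goals try linear_combination r11
    all_goals linear_combination U.det * V.det * P 2 2 ^ 2 * Q 2 2 ^ 2 * hb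
        + U.det * V.det * Q 2 2 ^ 2 * hP22 + U.det * V.det * hQ22
  have hrw : U' * diagonal ![1, 1, (U' * V'ᵀ).det] * V'ᵀ
      = U * (P * diagonal ![1, 1, (U' * V'ᵀ).det] * Qᵀ) * Vᵀ := by
    rw [hU'eq, hV'eq, Matrix.transpose_mul]
    simp only [Matrix.mul_assoc]
  rw [svdProj, svdProj, hrw, hmid]


/-- Transpose equivariance of the SVD projection. If `A = U Σ Vᵀ` and
`Aᵀ = U' Σ V'ᵀ` are O(3)-SVDs with the same `Σ = diag(σ₁,σ₂,σ₃)`, `σ₁ ≥ σ₂ > σ₃ ≥ 0`,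
then `Proj(U',V') = (Proj(U,V))ᵀ`. -/
theorem svdProj_transpose (A U V U' V' : Matrix (Fin 3) (Fin 3) ℝ) (σ₁ σ₂ σ₃ : ℝ)
    (hU : IsOrtho3 U) (hV : IsOrtho3 V) (hU' : IsOrtho3 U') (hV' : IsOrtho3 V')
    (h12 : σ₁ ≥ σ₂) (h23 : σ₂ > σ₃) (h3 : σ₃ ≥ 0)
    (hA : A = U * diagonal ![σ₁, σ₂, σ₃] * Vᵀ)
    (hA' : Aᵀ = U' * diagonal ![σ₁, σ₂, σ₃] * V'ᵀ) :
    svdProj U' V' = (svdProj U V)ᵀ := by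
  have hAT : V * diagonal ![σ₁, σ₂, σ₃] * Uᵀ = U' * diagonal ![σ₁, σ₂, σ₃] * V'ᵀ := by
    rw [← hA', hA]
    simp [Matrix.transpose_mul, Matrix.diagonal_transpose, Matrix.mul_assoc]
  have hkey := key V U U' V' σ₁ σ₂ σ₃ hV hU hU' hV' h12 h23 h3 hAT
  rw [← hkey, svdProj, svdProj]
  rw [Matrix.transpose_mul, Matrix.transpose_mul, Matrix.transpose_transpose,
    Matrix.diagonal_transpose]
  have hd : (V * Uᵀ).det = (U * Vᵀ).det := by
    simp only [Matrix.det_mul, Matrix.det_transpose]; ring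
  rw [hd]
  simp [Matrix.mul_assoc]
end

section
/- (Scale invariance of the SVD projection.) Let A ∈ ℝ^{3×3} and let c > 0. Suppose A = U Σ Vᵀ and cA = U' (cΣ) V'ᵀ are O(3)-SVDs, where Σ = diag(σ₁,σ₂,σ₃) satisfies σ₁ ≥ σ₂ > σ₃ ≥ 0. Then Proj(U',V') = Proj(U,V). -/
open Matrix

private lemma entry_zero' {x a b : ℝ} (h : x * a = b * x) (hab : a ≠ b) : x = 0 := by
  rcases mul_eq_zero.1 (show x * (a - b) = 0 by linear_combination h) with h' | h'
  · exact h'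
  · exact absurd (by linarith) hab

private lemma cancel_eq' {x y s : ℝ} (hs : s ≠ 0) (h : x * s = s * y) : x = y :=
  mul_right_cancel₀ hs (by linear_combination h)

/-- Scale invariance of the SVD projection. If `A = U Σ Vᵀ` and
`cA = U' (cΣ) V'ᵀ` are O(3)-SVDs with `Σ = diag(σ₁,σ₂,σ₃)`, `σ₁ ≥ σ₂ > σ₃ ≥ 0`, `c > 0`,
then `Proj(U',V') = Proj(U,V)`. -/
theorem svdProj_scale_invariant (A U V U' V' : Matrix (Fin 3) (Fin 3) ℝ)
    (σ₁ σ₂ σ₃ c : ℝ) (hc : 0 < c)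
    (hU : IsOrtho3 U) (hV : IsOrtho3 V) (hU' : IsOrtho3 U') (hV' : IsOrtho3 V')
    (h12 : σ₁ ≥ σ₂) (h23 : σ₂ > σ₃) (h3 : σ₃ ≥ 0)
    (hA : A = U * diagonal ![σ₁, σ₂, σ₃] * Vᵀ)
    (hA' : c • A = U' * (c • diagonal ![σ₁, σ₂, σ₃]) * V'ᵀ) :
    svdProj U' V' = svdProj U V := by
  have hσ2 : 0 < σ₂ := lt_of_le_of_lt h3 h23
  have hσ1 : 0 < σ₁ := lt_of_lt_of_le hσ2 h12
  have hU1 : Uᵀ * U = 1 := hU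
  have hV1 : Vᵀ * V = 1 := hV
  have hU'1 : U'ᵀ * U' = 1 := hU'
  have hV'1 : V'ᵀ * V' = 1 := hV'
  have hUo : U * Uᵀ = 1 := mul_eq_one_comm.mp hU1
  have hVo : V * Vᵀ = 1 := mul_eq_one_comm.mp hV1
  have hU'o : U' * U'ᵀ = 1 := mul_eq_one_comm.mp hU'1
  have hV'o : V' * V'ᵀ = 1 := mul_eq_one_comm.mp hV'1
  set d : Fin 3 → ℝ := ![σ₁, σ₂, σ₃] with hd
  set D : Matrix (Fin 3) (Fin 3) ℝ := diagonal d with hDdef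
  have hd0 : d 0 = σ₁ := rfl
  have hd1 : d 1 = σ₂ := rfl
  have hd2 : d 2 = σ₃ := rfl
  -- cancel c
  have h1 : U' * D * V'ᵀ = U * D * Vᵀ := by
    rw [hA] at hA'
    have h2 : c • (U' * D * V'ᵀ) = c • (U * D * Vᵀ) := by
      calc c • (U' * D * V'ᵀ) = U' * (c • D) * V'ᵀ := by
            rw [Matrix.mul_smul, Matrix.smul_mul]
        _ = c • (U * D * Vᵀ) := hA'.symm
    exact smul_right_injective _ hc.ne' h2
  set P : Matrix (Fin 3) (Fin 3) ℝ := Uᵀ * U' with hPdef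
  set Q : Matrix (Fin 3) (Fin 3) ℝ := Vᵀ * V' with hQdef
  have hU'eq : U' = U * P := by
    rw [hPdef, ← Matrix.mul_assoc, hUo, Matrix.one_mul]
  have hV'eq : V' = V * Q := by
    rw [hQdef, ← Matrix.mul_assoc, hVo, Matrix.one_mul]
  have hDt : Dᵀ = D := by rw [hDdef]; exact Matrix.diagonal_transpose d
  clear_value d D P Q
  have hPt : Pᵀ * P = 1 := by
    rw [hPdef, Matrix.transpose_mul, Matrix.transpose_transpose, Matrix.mul_assoc,
      ← Matrix.mul_assoc U Uᵀ U', hUo, Matrix.one_mul, hU'1]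
  have hQt : Qᵀ * Q = 1 := by
    rw [hQdef, Matrix.transpose_mul, Matrix.transpose_transpose, Matrix.mul_assoc,
      ← Matrix.mul_assoc V Vᵀ V', hVo, Matrix.one_mul, hV'1]
  have hPo : P * Pᵀ = 1 := mul_eq_one_comm.mp hPt
  have hQo : Q * Qᵀ = 1 := mul_eq_one_comm.mp hQt
  -- P D = D Q
  have hPDQ : P * D = D * Q := by
    have hl : Uᵀ * (U' * D * V'ᵀ) * V' = P * D := by
      calc Uᵀ * (U' * D * V'ᵀ) * V' = (Uᵀ * U') * (D * (V'ᵀ * V')) := by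
            simp only [Matrix.mul_assoc]
        _ = P * D := by rw [hV'1, Matrix.mul_one, hPdef]
    have hr : Uᵀ * (U * D * Vᵀ) * V' = D * Q := by
      calc Uᵀ * (U * D * Vᵀ) * V' = (Uᵀ * U) * (D * (Vᵀ * V')) := by
            simp only [Matrix.mul_assoc]
        _ = D * Q := by rw [hU1, Matrix.one_mul, hQdef]
    rw [← hl, ← hr, h1]
  -- P commutes with D², Q commutes with D²
  have hPD2 : P * (D * D) = (D * D) * P := by
    have h2 : P * D * (Dᵀ * Pᵀ) = D * Q * (Qᵀ * Dᵀ) := by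
      rw [← Matrix.transpose_mul P D, ← Matrix.transpose_mul D Q, hPDQ]
    rw [hDt] at h2
    have h3 : P * (D * D) * Pᵀ = D * D := by
      calc P * (D * D) * Pᵀ = P * D * (D * Pᵀ) := by
            simp only [Matrix.mul_assoc]
        _ = D * Q * (Qᵀ * D) := h2
        _ = D * (Q * Qᵀ) * D := by simp only [Matrix.mul_assoc]
        _ = D * D := by rw [hQo, Matrix.mul_one]
    calc P * (D * D) = P * (D * D) * (Pᵀ * P) := by rw [hPt, Matrix.mul_one]
      _ = P * (D * D) * Pᵀ * P := by rw [Matrix.mul_assoc (P * (D * D))]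
      _ = (D * D) * P := by rw [h3]
  have hQD2 : Q * (D * D) = (D * D) * Q := by
    have h2 : Dᵀ * Pᵀ * (P * D) = Qᵀ * Dᵀ * (D * Q) := by
      rw [← Matrix.transpose_mul P D, ← Matrix.transpose_mul D Q, hPDQ]
    rw [hDt] at h2
    have h3 : Qᵀ * (D * D) * Q = D * D := by
      calc Qᵀ * (D * D) * Q = Qᵀ * D * (D * Q) := by
            simp only [Matrix.mul_assoc]
        _ = D * Pᵀ * (P * D) := h2.symm
        _ = D * (Pᵀ * P) * D := by simp only [Matrix.mul_assoc]
        _ = D * D := by rw [hPt, Matrix.mul_one]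
    calc Q * (D * D) = Q * (Qᵀ * (D * D) * Q) := by rw [h3]
      _ = (Q * Qᵀ) * ((D * D) * Q) := by simp only [Matrix.mul_assoc]
      _ = (D * D) * Q := by rw [hQo, Matrix.one_mul]
  have hDD : D * D = diagonal (fun k => d k * d k) := by
    rw [hDdef, Matrix.diagonal_mul_diagonal]
  rw [hDD] at hPD2 hQD2
  have hP2 : ∀ i j, P i j * (d j * d j) = d i * d i * P i j := by
    intro i j
    have h := congrFun (congrFun hPD2 i) j
    rwa [Matrix.mul_diagonal, Matrix.diagonal_mul] at h
  have hQ2 : ∀ i j, Q i j * (d j * d j) = d i * d i * Q i j := by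
    intro i j
    have h := congrFun (congrFun hQD2 i) j
    rwa [Matrix.mul_diagonal, Matrix.diagonal_mul] at h
  have hPQd : ∀ i j, P i j * d j = d i * Q i j := by
    intro i j
    have h := congrFun (congrFun hPDQ i) j
    rwa [hDdef, Matrix.mul_diagonal, Matrix.diagonal_mul] at h
  -- distinctness of σ₃
  have hne13 : σ₃ * σ₃ ≠ σ₁ * σ₁ := by nlinarith
  have hne23 : σ₃ * σ₃ ≠ σ₂ * σ₂ := by nlinarith
  -- zero entries in row/column 3
  have hP02 : P 0 2 = 0 := entry_zero' (by have := hP2 0 2; rwa [hd0, hd2] at this) hne13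
  have hP12 : P 1 2 = 0 := entry_zero' (by have := hP2 1 2; rwa [hd1, hd2] at this) hne23
  have hP20 : P 2 0 = 0 := entry_zero' (by have := hP2 2 0; rwa [hd0, hd2] at this) hne13.symm
  have hP21 : P 2 1 = 0 := entry_zero' (by have := hP2 2 1; rwa [hd1, hd2] at this) hne23.symm
  have hQ02 : Q 0 2 = 0 := entry_zero' (by have := hQ2 0 2; rwa [hd0, hd2] at this) hne13
  have hQ12 : Q 1 2 = 0 := entry_zero' (by have := hQ2 1 2; rwa [hd1, hd2] at this) hne23
  have hQ20 : Q 2 0 = 0 := entry_zero' (by have := hQ2 2 0; rwa [hd0, hd2] at this) hne13.symm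
  have hQ21 : Q 2 1 = 0 := entry_zero' (by have := hQ2 2 1; rwa [hd1, hd2] at this) hne23.symm
  -- the upper-left 2×2 blocks agree
  have hB00 : P 0 0 = Q 0 0 :=
    cancel_eq' hσ1.ne' (by have := hPQd 0 0; rwa [hd0] at this)
  have hB11 : P 1 1 = Q 1 1 :=
    cancel_eq' hσ2.ne' (by have := hPQd 1 1; rwa [hd1] at this)
  have hB01 : P 0 1 = Q 0 1 := by
    rcases eq_or_lt_of_le h12.ge with heq | hlt
    · -- σ₂ = σ₁
      have h := hPQd 0 1; rw [hd0, hd1, ← heq] at h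
      exact cancel_eq' hσ2.ne' h
    · have hne : σ₂ * σ₂ ≠ σ₁ * σ₁ := by nlinarith
      have hp : P 0 1 = 0 := entry_zero' (by have := hP2 0 1; rwa [hd0, hd1] at this) hne
      have hq : Q 0 1 = 0 := entry_zero' (by have := hQ2 0 1; rwa [hd0, hd1] at this) hne
      rw [hp, hq]
  have hB10 : P 1 0 = Q 1 0 := by
    rcases eq_or_lt_of_le h12.ge with heq | hlt
    · have h := hPQd 1 0; rw [hd0, hd1, heq] at h
      exact cancel_eq' hσ1.ne' (by rw [← heq] at h ⊢; exact h)
    · have hne : σ₂ * σ₂ ≠ σ₁ * σ₁ := by nlinarith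
      have hp : P 1 0 = 0 := entry_zero' (by have := hP2 1 0; rwa [hd0, hd1] at this) hne.symm
      have hq : Q 1 0 = 0 := entry_zero' (by have := hQ2 1 0; rwa [hd0, hd1] at this) hne.symm
      rw [hp, hq]
  -- corner entries square to 1
  have hP22 : P 2 2 * P 2 2 = 1 := by
    have h := congrFun (congrFun hPo 2) 2
    simp only [Matrix.mul_apply, Fin.sum_univ_three, Matrix.transpose_apply,
      Matrix.one_apply_eq] at h
    rw [hP20, hP21] at h
    linarith
  have hQ22 : Q 2 2 * Q 2 2 = 1 := by
    have h := congrFun (congrFun hQo 2) 2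
    simp only [Matrix.mul_apply, Fin.sum_univ_three, Matrix.transpose_apply,
      Matrix.one_apply_eq] at h
    rw [hQ20, hQ21] at h
    linarith
  -- determinant bookkeeping
  have hdetU2 : U.det * U.det = 1 := by
    have h := congrArg Matrix.det hU1
    rwa [Matrix.det_mul, Matrix.det_transpose, Matrix.det_one] at h
  have hdetV2 : V.det * V.det = 1 := by
    have h := congrArg Matrix.det hV1
    rwa [Matrix.det_mul, Matrix.det_transpose, Matrix.det_one] at h
  have hdetP : P.det = U.det * U'.det := by
    rw [hPdef, Matrix.det_mul, Matrix.det_transpose]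
  have hdetQ : Q.det = V.det * V'.det := by
    rw [hQdef, Matrix.det_mul, Matrix.det_transpose]
  have hdetP2 : P.det * P.det = 1 := by
    have h := congrArg Matrix.det hPt
    rwa [Matrix.det_mul, Matrix.det_transpose, Matrix.det_one] at h
  have hPdet3 : P.det = P 2 2 * (Q 0 0 * Q 1 1 - Q 0 1 * Q 1 0) := by
    rw [Matrix.det_fin_three, hP02, hP12, hP20, hP21, hB00, hB01, hB10, hB11]; ring
  have hQdet3 : Q.det = Q 2 2 * (Q 0 0 * Q 1 1 - Q 0 1 * Q 1 0) := by
    rw [Matrix.det_fin_three, hQ02, hQ12, hQ20, hQ21]; ring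
  have hb2 : (Q 0 0 * Q 1 1 - Q 0 1 * Q 1 0) * (Q 0 0 * Q 1 1 - Q 0 1 * Q 1 0) = 1 := by
    have h := hdetP2
    rw [hPdet3] at h
    linear_combination h - (Q 0 0 * Q 1 1 - Q 0 1 * Q 1 0) * (Q 0 0 * Q 1 1 - Q 0 1 * Q 1 0) * hP22
  have hPQdet : P.det * Q.det = P 2 2 * Q 2 2 := by
    rw [hPdet3, hQdet3]
    linear_combination (P 2 2 * Q 2 2) * hb2
  have he' : (U' * V'ᵀ).det = (U * Vᵀ).det * (P 2 2 * Q 2 2) := by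
    rw [Matrix.det_mul, Matrix.det_mul, Matrix.det_transpose, Matrix.det_transpose]
    have h1 : U.det * P.det = U'.det := by
      rw [hdetP]; linear_combination U'.det * hdetU2
    have h2 : V.det * Q.det = V'.det := by
      rw [hdetQ]; linear_combination V'.det * hdetV2
    rw [← h1, ← h2, ← hPQdet]; ring
  -- the key matrix identity
  have hPE : P * diagonal ![1, 1, (U' * V'ᵀ).det] = diagonal ![1, 1, (U * Vᵀ).det] * Q := by
    ext i j
    rw [Matrix.mul_diagonal, Matrix.diagonal_mul]
    fin_cases i <;> fin_cases j <;>
      simp [hB00, hB01, hB10, hB11, hP02, hP12, hP20, hP21, hQ02, hQ12, hQ20, hQ21, he'] <;>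
      linear_combination (Q 2 2 * U.det * V.det) * hP22
  -- conclude
  unfold svdProj
  calc U' * diagonal ![1, 1, (U' * V'ᵀ).det] * V'ᵀ
      = U * P * diagonal ![1, 1, (U' * V'ᵀ).det] * (V * Q)ᵀ := by
        rw [← hU'eq, ← hV'eq]
    _ = U * (P * diagonal ![1, 1, (U' * V'ᵀ).det] * Qᵀ * Vᵀ) := by
        rw [Matrix.transpose_mul]; simp only [Matrix.mul_assoc]
    _ = U * (diagonal ![1, 1, (U * Vᵀ).det] * Q * Qᵀ * Vᵀ) := by rw [hPE]
    _ = U * (diagonal ![1, 1, (U * Vᵀ).det] * (Q * Qᵀ) * Vᵀ) := by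
        rw [Matrix.mul_assoc (diagonal ![1, 1, (U * Vᵀ).det]) Q Qᵀ]
    _ = U * diagonal ![1, 1, (U * Vᵀ).det] * Vᵀ := by
        rw [hQo, Matrix.mul_one, ← Matrix.mul_assoc]
end

section
/- (Scale-equivariance of Arun's method, Proposition 1 part 3.) Let N ≥ 1, X, Y : Fin N → ℝ³ be point clouds, and c > 0. Suppose R(X,Y) = U Σ Vᵀ and R(cX, cY) = U' (c²Σ) V'ᵀ are O(3)-SVDs, where Σ = diag(σ₁,σ₂,σ₃), σ₁ ≥ σ₂ > σ₃ ≥ 0, and (cX) i = c·(X i), (cY) i = c·(Y i). Let r = Proj(U,V), t = m(Y) − r·m(X), and r' = Proj(U',V'), t' = m(cY) − r'·m(cX). Then r' = r and t' = c·t. -/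
open Matrix

lemma pcMean_smul' {N : ℕ} (X : Fin N → Fin 3 → ℝ) (c : ℝ) :
    pcMean (fun i => c • X i) = c • pcMean X := by
  unfold pcMean
  rw [← Finset.smul_sum, smul_comm]

lemma corrMat_smul' {N : ℕ} (X Y : Fin N → Fin 3 → ℝ) (c : ℝ) :
    corrMat (fun i => c • X i) (fun i => c • Y i) = (c^2) • corrMat X Y := by
  unfold corrMat
  rw [Finset.smul_sum]
  refine Finset.sum_congr rfl fun i _ => ?_
  rw [pcMean_smul', pcMean_smul']
  ext a b
  simp [vecMulVec_apply, Pi.smul_apply, smul_eq_mul]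
  ring

lemma cancel0 {x p : ℝ} (h : x * p = 0) (hp : p ≠ 0) : x = 0 :=
  (mul_eq_zero.mp h).resolve_right hp


/-- Scale-equivariance of Arun's method. With `c > 0`, O(3)-SVDs
`R(X,Y) = U Σ Vᵀ` and `R(cX,cY) = U' (c²Σ) V'ᵀ` where `Σ = diag(σ₁,σ₂,σ₃)`,
`σ₁ ≥ σ₂ > σ₃ ≥ 0`, the outputs `r = Proj(U,V)`, `t = m(Y) − r·m(X)` and
`r' = Proj(U',V')`, `t' = m(cY) − r'·m(cX)` satisfy `r' = r` and `t' = c·t`. -/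
theorem arun_scale_equivariant {N : ℕ} (hN : 1 ≤ N) (X Y : Fin N → Fin 3 → ℝ)
    (c : ℝ) (hc : 0 < c)
    (U V U' V' : Matrix (Fin 3) (Fin 3) ℝ) (σ₁ σ₂ σ₃ : ℝ)
    (hU : IsOrtho3 U) (hV : IsOrtho3 V) (hU' : IsOrtho3 U') (hV' : IsOrtho3 V')
    (h12 : σ₁ ≥ σ₂) (h23 : σ₂ > σ₃) (h3 : σ₃ ≥ 0)
    (hA : corrMat X Y = U * diagonal ![σ₁, σ₂, σ₃] * Vᵀ)
    (hA' : corrMat (fun i => c • X i) (fun i => c • Y i)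
      = U' * ((c ^ 2) • diagonal ![σ₁, σ₂, σ₃]) * V'ᵀ) :
    svdProj U' V' = svdProj U V ∧
    pcMean (fun i => c • Y i) - (svdProj U' V').mulVec (pcMean (fun i => c • X i))
      = c • (pcMean Y - (svdProj U V).mulVec (pcMean X)) := by
  have hU'' : Uᵀ * U = 1 := hU
  have hV'' : Vᵀ * V = 1 := hV
  have hU''' : U'ᵀ * U' = 1 := hU'
  have hV''' : V'ᵀ * V' = 1 := hV'
  have hUUt : U * Uᵀ = 1 := mul_eq_one_comm.mp hU''
  have hVVt : V * Vᵀ = 1 := mul_eq_one_comm.mp hV''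
  have hU'Ut : U' * U'ᵀ = 1 := mul_eq_one_comm.mp hU'''
  have hV'Vt : V' * V'ᵀ = 1 := mul_eq_one_comm.mp hV'''
  set d : Fin 3 → ℝ := ![σ₁, σ₂, σ₃] with hd
  -- cancel the scale factor
  have hEq : U * diagonal d * Vᵀ = U' * diagonal d * V'ᵀ := by
    have h1 : (c^2) • (U * diagonal d * Vᵀ) = (c^2) • (U' * diagonal d * V'ᵀ) := by
      rw [← hA, ← corrMat_smul', hA']
      simp [Matrix.mul_smul, Matrix.smul_mul]
    exact smul_right_injective _ (by positivity : (c:ℝ)^2 ≠ 0) h1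
  set W : Matrix (Fin 3) (Fin 3) ℝ := Uᵀ * U' with hWdef
  set Z : Matrix (Fin 3) (Fin 3) ℝ := Vᵀ * V' with hZdef
  have hU'eq : U' = U * W := by
    rw [hWdef, ← Matrix.mul_assoc, hUUt, Matrix.one_mul]
  have hV'eq : V' = V * Z := by
    rw [hZdef, ← Matrix.mul_assoc, hVVt, Matrix.one_mul]
  have hWZ : W * diagonal d = diagonal d * Z := by
    have h1 : Uᵀ * (U * diagonal d * Vᵀ) * V' = diagonal d * Z := by
      simp only [Matrix.mul_assoc]
      rw [← Matrix.mul_assoc Uᵀ U, hU'', Matrix.one_mul, hZdef]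
    have h2 : Uᵀ * (U' * diagonal d * V'ᵀ) * V' = W * diagonal d := by
      simp only [Matrix.mul_assoc]
      rw [hV''', Matrix.mul_one, ← Matrix.mul_assoc]
    rw [← h1, ← h2, hEq]
  have hZW : Z * diagonal d = diagonal d * W := by
    have hEqT : V * diagonal d * Uᵀ = V' * diagonal d * U'ᵀ := by
      have := congrArg Matrix.transpose hEq
      simpa [Matrix.transpose_mul, Matrix.diagonal_transpose, Matrix.mul_assoc] using this
    have h1 : Vᵀ * (V * diagonal d * Uᵀ) * U' = diagonal d * W := by
      simp only [Matrix.mul_assoc]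
      rw [← Matrix.mul_assoc Vᵀ V, hV'', Matrix.one_mul, hWdef]
    have h2 : Vᵀ * (V' * diagonal d * U'ᵀ) * U' = Z * diagonal d := by
      simp only [Matrix.mul_assoc]
      rw [hU''', Matrix.mul_one, ← Matrix.mul_assoc]
    rw [← h1, ← h2, hEqT]
  have e1 : ∀ i j, W i j * d j = d i * Z i j := by
    intro i j
    have := congrFun (congrFun hWZ i) j
    simpa [Matrix.mul_diagonal, Matrix.diagonal_mul] using this
  have e2 : ∀ i j, Z i j * d j = d i * W i j := by
    intro i j
    have := congrFun (congrFun hZW i) j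
    simpa [Matrix.mul_diagonal, Matrix.diagonal_mul] using this
  have hd0 : d 0 = σ₁ := rfl
  have hd1 : d 1 = σ₂ := rfl
  have hd2 : d 2 = σ₃ := rfl
  have hσ2 : 0 < σ₂ := lt_of_le_of_lt h3 h23
  have hσ1 : 0 < σ₁ := lt_of_lt_of_le hσ2 h12
  have main0 : ∀ i : Fin 3, d 2 < d i → W i 2 = 0 ∧ W 2 i = 0 ∧ Z i 2 = 0 ∧ Z 2 i = 0 := by
    intro i hi
    have hd2n : 0 ≤ d 2 := by rw [hd2]; exact h3
    have hp0 : 0 < (d i + d 2) * (d i - d 2) := by nlinarith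
    have hp : (d i + d 2) * (d i - d 2) ≠ 0 := hp0.ne'
    have a1 := e1 i 2; have a2 := e2 i 2; have a3 := e1 2 i; have a4 := e2 2 i
    refine ⟨cancel0 ?_ hp, cancel0 ?_ hp, cancel0 ?_ hp, cancel0 ?_ hp⟩
    · linear_combination (-(d 2)) * a1 + (-(d i)) * a2
    · linear_combination (d i) * a3 + (d 2) * a4
    · linear_combination (-(d 2)) * a2 + (-(d i)) * a1
    · linear_combination (d i) * a4 + (d 2) * a3
  have q : ∀ i j : Fin 3, 0 < d i + d j → W i j = Z i j := by
    intro i j h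
    have a := e1 i j; have b := e2 i j
    have h0 : (W i j - Z i j) * (d i + d j) = 0 := by linear_combination a - b
    have := cancel0 h0 h.ne'
    linarith
  obtain ⟨w02, w20, z02, z20⟩ := main0 0 (by rw [hd2, hd0]; linarith)
  obtain ⟨w12, w21, z12, z21⟩ := main0 1 (by rw [hd2, hd1]; linarith)
  have q00 := q 0 0 (by rw [hd0]; linarith)
  have q01 := q 0 1 (by rw [hd0, hd1]; linarith)
  have q10 := q 1 0 (by rw [hd0, hd1]; linarith)
  have q11 := q 1 1 (by rw [hd1]; linarith)
  have hWWt : W * Wᵀ = 1 := by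
    rw [hWdef, Matrix.transpose_mul, Matrix.transpose_transpose, Matrix.mul_assoc,
      ← Matrix.mul_assoc U' U'ᵀ, hU'Ut, Matrix.one_mul, hU'']
  have hWtW : Wᵀ * W = 1 := mul_eq_one_comm.mp hWWt
  have hZZt : Z * Zᵀ = 1 := by
    rw [hZdef, Matrix.transpose_mul, Matrix.transpose_transpose, Matrix.mul_assoc,
      ← Matrix.mul_assoc V' V'ᵀ, hV'Vt, Matrix.one_mul, hV'']
  have rW : ∀ i j, W i 0 * W j 0 + W i 1 * W j 1 + W i 2 * W j 2
      = (if i = j then (1:ℝ) else 0) := by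
    intro i j
    have := congrFun (congrFun hWWt i) j
    simpa [Matrix.mul_apply, Fin.sum_univ_three, Matrix.transpose_apply,
      Matrix.one_apply] using this
  have cW : ∀ i j, W 0 i * W 0 j + W 1 i * W 1 j + W 2 i * W 2 j
      = (if i = j then (1:ℝ) else 0) := by
    intro i j
    have := congrFun (congrFun hWtW i) j
    simpa [Matrix.mul_apply, Fin.sum_univ_three, Matrix.transpose_apply,
      Matrix.one_apply] using this
  have rZ : ∀ i j, Z i 0 * Z j 0 + Z i 1 * Z j 1 + Z i 2 * Z j 2
      = (if i = j then (1:ℝ) else 0) := by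
    intro i j
    have := congrFun (congrFun hZZt i) j
    simpa [Matrix.mul_apply, Fin.sum_univ_three, Matrix.transpose_apply,
      Matrix.one_apply] using this
  have hW22 : W 2 2 * W 2 2 = 1 := by
    have h := rW 2 2; rw [w20, w21] at h; simpa using h
  have hZ22 : Z 2 2 * Z 2 2 = 1 := by
    have h := rZ 2 2; rw [z20, z21] at h; simpa using h
  have c00 := cW 0 0
  have c01 := cW 0 1
  have c11 := cW 1 1
  rw [w20] at c00 c01
  rw [w21] at c01 c11
  simp only [if_pos rfl, mul_zero, zero_mul, add_zero] at c00 c11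
  simp only [mul_zero, zero_mul, add_zero] at c01
  have hc01 : W 0 0 * W 0 1 + W 1 0 * W 1 1 = 0 := by simpa using c01
  have hc00 : W 0 0 * W 0 0 + W 1 0 * W 1 0 = 1 := by simpa using c00
  have hc11 : W 0 1 * W 0 1 + W 1 1 * W 1 1 = 1 := by simpa using c11
  have hb : (W 0 0 * W 1 1 - W 0 1 * W 1 0) ^ 2 = 1 := by
    linear_combination (W 0 1 * W 0 1 + W 1 1 * W 1 1) * hc00 + hc11
      - (W 0 0 * W 0 1 + W 1 0 * W 1 1) * hc01
  have r01 := rW 0 1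
  rw [w02, w12] at r01
  have hr01 : W 0 0 * W 1 0 + W 0 1 * W 1 1 = 0 := by simpa using r01
  have r00 := rW 0 0
  have r11 := rW 1 1
  rw [w02] at r00
  rw [w12] at r11
  have hr00 : W 0 0 * W 0 0 + W 0 1 * W 0 1 = 1 := by simpa using r00
  have hr11 : W 1 0 * W 1 0 + W 1 1 * W 1 1 = 1 := by simpa using r11
  have hdetW : W.det = W 2 2 * (W 0 0 * W 1 1 - W 0 1 * W 1 0) := by
    rw [Matrix.det_fin_three, w02, w12, w20, w21]; ring
  have hdetZ : Z.det = Z 2 2 * (W 0 0 * W 1 1 - W 0 1 * W 1 0) := by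
    rw [Matrix.det_fin_three, z02, z12, z20, z21, ← q00, ← q01, ← q10, ← q11]; ring
  set e' : ℝ := (U' * V'ᵀ).det with he'def
  set δ : ℝ := (U * Vᵀ).det with hδdef
  have hdet' : e' = δ * (W.det * Z.det) := by
    have hdU' : U'.det = U.det * W.det := by rw [hU'eq, Matrix.det_mul]
    have hdV' : V'.det = V.det * Z.det := by rw [hV'eq, Matrix.det_mul]
    have h1 : e' = U'.det * V'.det := by
      rw [he'def, Matrix.det_mul, Matrix.det_transpose]
    have h2 : δ = U.det * V.det := by
      rw [hδdef, Matrix.det_mul, Matrix.det_transpose]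
    rw [h1, h2, hdU', hdV']; ring
  have he' : e' = δ * ((W 2 2 * (W 0 0 * W 1 1 - W 0 1 * W 1 0))
      * (Z 2 2 * (W 0 0 * W 1 1 - W 0 1 * W 1 0))) := by
    rw [hdet', hdetW, hdetZ]
  have S : W * diagonal ![1, 1, e'] * Zᵀ = diagonal ![(1:ℝ), 1, δ] := by
    ext i j
    fin_cases i <;> fin_cases j <;>
      simp [Matrix.mul_apply, Fin.sum_univ_three, Matrix.diagonal_apply,
        Matrix.transpose_apply, w02, w12, w20, w21, z02, z12, z20, z21]
    · rw [← q00, ← q01]; exact hr00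
    · rw [← q10, ← q11]; exact hr01
    · rw [← q00, ← q01]; linear_combination hr01
    · rw [← q10, ← q11]; exact hr11
    · rw [he']
      linear_combination (δ * (W 2 2 * W 2 2) * (Z 2 2 * Z 2 2)) * hb
        + (δ * (Z 2 2 * Z 2 2)) * hW22 + δ * hZ22
  have hr : svdProj U' V' = svdProj U V := by
    unfold svdProj
    rw [← he'def, ← hδdef]
    calc U' * diagonal ![1, 1, e'] * V'ᵀ
        = U * (W * diagonal ![1, 1, e'] * Zᵀ) * Vᵀ := by
          rw [hU'eq, hV'eq]
          simp only [Matrix.transpose_mul, Matrix.mul_assoc]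
      _ = U * diagonal ![(1:ℝ), 1, δ] * Vᵀ := by rw [S, Matrix.mul_assoc]
  refine ⟨hr, ?_⟩
  rw [hr, pcMean_smul', pcMean_smul', Matrix.mulVec_smul, smul_sub]
end

section
/- (Uniqueness of Arun's method.) Let N ≥ 1 and X, Y : Fin N → ℝ³ be point clouds. Suppose R(X,Y) = U Σ Vᵀ = Ũ Σ Ṽᵀ are two O(3)-SVDs with the same Σ = diag(σ₁,σ₂,σ₃) satisfying σ₁ ≥ σ₂ > σ₃ ≥ 0. Let r = Proj(U,V), t = m(Y) − r·m(X) and r̃ = Proj(Ũ,Ṽ), t̃ = m(Y) − r̃·m(X). Then r = r̃ and t = t̃; i.e. under Assumption 1 the output of Arun's method does not depend on the choice of SVD decomposition. -/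
set_option maxHeartbeats 1000000


open Matrix

/-- Helper: cancellation to zero. -/
lemma arun_aux0 {a b s t : ℝ} (h1 : a * t = s * b) (h2 : b * t = s * a)
    (hne : s ^ 2 ≠ t ^ 2) : a = 0 := by
  have h3 : a * (s ^ 2 - t ^ 2) = 0 := by linear_combination (-t) * h1 + (-s) * h2
  rcases mul_eq_zero.mp h3 with h | h
  · exact h
  · exact absurd (by linarith : s ^ 2 = t ^ 2) hne

/-- Helper: equality of entries. -/
lemma arun_auxeq {a b s t : ℝ} (h1 : a * t = s * b) (h2 : b * t = s * a)
    (hs : 0 < s) (ht : 0 < t) : a = b := by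
  have h3 : (a - b) * (t + s) = 0 := by linear_combination h1 - h2
  rcases mul_eq_zero.mp h3 with h | h
  · linarith
  · linarith

/-- Helper: intertwining. -/
lemma arun_key3 (A B C E S : Matrix (Fin 3) (Fin 3) ℝ) (hB : Bᵀ * B = 1) (hC : Cᵀ * C = 1)
    (h : A * S * Bᵀ = C * S * Eᵀ) : (Cᵀ * A) * S = S * (Eᵀ * B) := by
  have h1 : A * S * Bᵀ * B = C * S * Eᵀ * B := by rw [h]
  rw [Matrix.mul_assoc (A * S), hB, Matrix.mul_one] at h1
  calc Cᵀ * A * S = Cᵀ * (A * S) := by rw [Matrix.mul_assoc]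
    _ = Cᵀ * (C * S * Eᵀ * B) := by rw [h1]
    _ = (Cᵀ * C) * (S * (Eᵀ * B)) := by simp only [Matrix.mul_assoc]
    _ = S * (Eᵀ * B) := by rw [hC, Matrix.one_mul]

/-- Uniqueness of Arun's method. If `R(X,Y) = U Σ Vᵀ = Ũ Σ Ṽᵀ` are two
O(3)-SVDs with the same `Σ = diag(σ₁,σ₂,σ₃)`, `σ₁ ≥ σ₂ > σ₃ ≥ 0`, then the outputs
`(r, t)` and `(r̃, t̃)` of Arun's method coincide. -/
theorem arun_unique {N : ℕ} (hN : 1 ≤ N) (X Y : Fin N → Fin 3 → ℝ)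
    (U V U' V' : Matrix (Fin 3) (Fin 3) ℝ) (σ₁ σ₂ σ₃ : ℝ)
    (hU : IsOrtho3 U) (hV : IsOrtho3 V) (hU' : IsOrtho3 U') (hV' : IsOrtho3 V')
    (h12 : σ₁ ≥ σ₂) (h23 : σ₂ > σ₃) (h3 : σ₃ ≥ 0)
    (hA : corrMat X Y = U * diagonal ![σ₁, σ₂, σ₃] * Vᵀ)
    (hA' : corrMat X Y = U' * diagonal ![σ₁, σ₂, σ₃] * V'ᵀ) :
    svdProj U V = svdProj U' V' ∧
    pcMean Y - (svdProj U V).mulVec (pcMean X)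
      = pcMean Y - (svdProj U' V').mulVec (pcMean X) := by
  have hU'' := hU; have hV'' := hV; have hU''' := hU'; have hV''' := hV'
  unfold IsOrtho3 at hU hV hU' hV'
  have hUU : U * Uᵀ = 1 := mul_eq_one_comm.mp hU
  have hVV : V * Vᵀ = 1 := mul_eq_one_comm.mp hV
  have hU'U' : U' * U'ᵀ = 1 := mul_eq_one_comm.mp hU'
  have hV'V' : V' * V'ᵀ = 1 := mul_eq_one_comm.mp hV'
  set S : Matrix (Fin 3) (Fin 3) ℝ := diagonal ![σ₁, σ₂, σ₃] with hSdef
  have hE : U * S * Vᵀ = U' * S * V'ᵀ := hA.symm.trans hA'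
  have hET : V * S * Uᵀ = V' * S * U'ᵀ := by
    have := congrArg Matrix.transpose hE
    simpa [Matrix.transpose_mul, Matrix.mul_assoc, hSdef, Matrix.diagonal_transpose]
      using this
  set P : Matrix (Fin 3) (Fin 3) ℝ := U'ᵀ * U with hPdef
  set Q : Matrix (Fin 3) (Fin 3) ℝ := V'ᵀ * V with hQdef
  have hUP : U' * P = U := by rw [hPdef, ← Matrix.mul_assoc, hU'U', Matrix.one_mul]
  have hVQ : V' * Q = V := by rw [hQdef, ← Matrix.mul_assoc, hV'V', Matrix.one_mul]
  have hPS : P * S = S * Q := arun_key3 U V U' V' S hV hU' hE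
  have hQS : Q * S = S * P := arun_key3 V U V' U' S hU hV' hET
  have hPo : Pᵀ * P = 1 := by
    rw [hPdef, Matrix.transpose_mul, Matrix.transpose_transpose, Matrix.mul_assoc,
      ← Matrix.mul_assoc U', hU'U', Matrix.one_mul, hU]
  have hQo : Qᵀ * Q = 1 := by
    rw [hQdef, Matrix.transpose_mul, Matrix.transpose_transpose, Matrix.mul_assoc,
      ← Matrix.mul_assoc V', hV'V', Matrix.one_mul, hV]
  have hPPt : P * Pᵀ = 1 := mul_eq_one_comm.mp hPo
  have hQQt : Q * Qᵀ = 1 := mul_eq_one_comm.mp hQo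
  -- entrywise relations
  have ePQ : ∀ i j, P i j * (![σ₁, σ₂, σ₃] j) = (![σ₁, σ₂, σ₃] i) * Q i j := by
    intro i j
    have := (Matrix.ext_iff.2 hPS) i j
    simpa [hSdef, Matrix.mul_diagonal, Matrix.diagonal_mul, mul_comm] using this
  have eQP : ∀ i j, Q i j * (![σ₁, σ₂, σ₃] j) = (![σ₁, σ₂, σ₃] i) * P i j := by
    intro i j
    have := (Matrix.ext_iff.2 hQS) i j
    simpa [hSdef, Matrix.mul_diagonal, Matrix.diagonal_mul, mul_comm] using this
  have hs1 : (0:ℝ) < σ₁ := by linarith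
  have hs2 : (0:ℝ) < σ₂ := by linarith
  have h13 : σ₁ ^ 2 ≠ σ₃ ^ 2 := by nlinarith
  have h23' : σ₂ ^ 2 ≠ σ₃ ^ 2 := by nlinarith
  -- zero entries
  have p02 : P 0 2 = 0 := arun_aux0 (by simpa using ePQ 0 2) (by simpa using eQP 0 2) h13
  have q02 : Q 0 2 = 0 := arun_aux0 (by simpa using eQP 0 2) (by simpa using ePQ 0 2) h13
  have p12 : P 1 2 = 0 := arun_aux0 (by simpa using ePQ 1 2) (by simpa using eQP 1 2) h23'
  have q12 : Q 1 2 = 0 := arun_aux0 (by simpa using eQP 1 2) (by simpa using ePQ 1 2) h23'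
  have p20 : P 2 0 = 0 :=
    arun_aux0 (by simpa using ePQ 2 0) (by simpa using eQP 2 0) (by nlinarith)
  have q20 : Q 2 0 = 0 :=
    arun_aux0 (by simpa using eQP 2 0) (by simpa using ePQ 2 0) (by nlinarith)
  have p21 : P 2 1 = 0 :=
    arun_aux0 (by simpa using ePQ 2 1) (by simpa using eQP 2 1) (by nlinarith)
  have q21 : Q 2 1 = 0 :=
    arun_aux0 (by simpa using eQP 2 1) (by simpa using ePQ 2 1) (by nlinarith)
  -- equal entries in the top-left block
  have e00 : P 0 0 = Q 0 0 :=
    arun_auxeq (by simpa using ePQ 0 0) (by simpa using eQP 0 0) hs1 hs1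
  have e01 : P 0 1 = Q 0 1 :=
    arun_auxeq (by simpa using ePQ 0 1) (by simpa using eQP 0 1) hs1 hs2
  have e10 : P 1 0 = Q 1 0 :=
    arun_auxeq (by simpa using ePQ 1 0) (by simpa using eQP 1 0) hs2 hs1
  have e11 : P 1 1 = Q 1 1 :=
    arun_auxeq (by simpa using ePQ 1 1) (by simpa using eQP 1 1) hs2 hs2
  -- orthogonality, entrywise (rows of P)
  have r00 : P 0 0 ^ 2 + P 0 1 ^ 2 = 1 := by
    have := (Matrix.ext_iff.2 hPPt) 0 0
    simp [Matrix.mul_apply, Matrix.transpose_apply, Matrix.one_apply, Fin.sum_univ_three, p02] at this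
    nlinarith [this]
  have r01 : P 0 0 * P 1 0 + P 0 1 * P 1 1 = 0 := by
    have := (Matrix.ext_iff.2 hPPt) 0 1
    simp [Matrix.mul_apply, Matrix.transpose_apply, Matrix.one_apply, Fin.sum_univ_three, p02, p12] at this
    linarith [this]
  have r11 : P 1 0 ^ 2 + P 1 1 ^ 2 = 1 := by
    have := (Matrix.ext_iff.2 hPPt) 1 1
    simp [Matrix.mul_apply, Matrix.transpose_apply, Matrix.one_apply, Fin.sum_univ_three, p12] at this
    nlinarith [this]
  have hp2 : P 2 2 ^ 2 = 1 := by
    have := (Matrix.ext_iff.2 hPPt) 2 2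
    simp [Matrix.mul_apply, Matrix.transpose_apply, Matrix.one_apply, Fin.sum_univ_three, p20, p21] at this
    nlinarith [this]
  have hq2 : Q 2 2 ^ 2 = 1 := by
    have := (Matrix.ext_iff.2 hQQt) 2 2
    simp [Matrix.mul_apply, Matrix.transpose_apply, Matrix.one_apply, Fin.sum_univ_three, q20, q21] at this
    nlinarith [this]
  -- determinant of the 2x2 block
  have hd2 : (P 0 0 * P 1 1 - P 0 1 * P 1 0) ^ 2 = 1 := by
    have := (Matrix.ext_iff.2 hPPt) 0 0
    nlinarith [r00, r11, r01]
  have hdetP : P.det = P 2 2 * (P 0 0 * P 1 1 - P 0 1 * P 1 0) := by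
    rw [Matrix.det_fin_three, p02, p12, p20, p21]; ring
  have hdetQ : Q.det = Q 2 2 * (P 0 0 * P 1 1 - P 0 1 * P 1 0) := by
    rw [Matrix.det_fin_three, q02, q12, q20, q21, ← e00, ← e01, ← e10, ← e11]; ring
  -- relation between the two determinant corrections
  have hdU : U.det = U'.det * P.det := by rw [← hUP, Matrix.det_mul]
  have hdV : V.det = V'.det * Q.det := by rw [← hVQ, Matrix.det_mul]
  have hee : (U * Vᵀ).det = (U' * V'ᵀ).det * (P.det * Q.det) := by
    rw [Matrix.det_mul, Matrix.det_mul, Matrix.det_transpose, Matrix.det_transpose,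
      hdU, hdV]; ring
  have hpq : P 2 2 * (U * Vᵀ).det * Q 2 2 = (U' * V'ᵀ).det := by
    rw [hee, hdetP, hdetQ]
    set d := P 0 0 * P 1 1 - P 0 1 * P 1 0
    linear_combination ((U' * V'ᵀ).det * Q 2 2 ^ 2 * d ^ 2) * hp2
      + ((U' * V'ᵀ).det * d ^ 2) * hq2 + (U' * V'ᵀ).det * hd2
  -- the key middle identity
  have hkey : ∀ c c' : ℝ, P 2 2 * c * Q 2 2 = c' →
      P * diagonal ![1, 1, c] * Qᵀ = diagonal ![1, 1, c'] := by
    intro c c' hcc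
    ext i j
    fin_cases i <;> fin_cases j <;>
      simp [Matrix.mul_apply, Matrix.mul_diagonal, Fin.sum_univ_three,
        Matrix.diagonal_apply, Matrix.transpose_apply, p02, p12, p20, p21,
        q02, q12, q20, q21, ← e00, ← e01, ← e10, ← e11]
    · linarith [r00]
    · linarith [r01]
    · linarith [r01]
    · linarith [r11]
    · linear_combination hcc
  have hr : svdProj U V = svdProj U' V' := by
    show U * diagonal ![1, 1, (U * Vᵀ).det] * Vᵀ
        = U' * diagonal ![1, 1, (U' * V'ᵀ).det] * V'ᵀ
    set e : ℝ := (U * Vᵀ).det with hedef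
    set e' : ℝ := (U' * V'ᵀ).det with he'def
    calc U * diagonal ![1, 1, e] * Vᵀ
        = (U' * P) * diagonal ![1, 1, e] * (V' * Q)ᵀ := by rw [hUP, hVQ]
      _ = U' * (P * diagonal ![1, 1, e] * Qᵀ) * V'ᵀ := by
          rw [Matrix.transpose_mul]; simp only [Matrix.mul_assoc]
      _ = U' * diagonal ![1, 1, e'] * V'ᵀ := by rw [hkey e e' hpq, Matrix.mul_assoc]
  exact ⟨hr, by rw [hr]⟩
end

section
/- (SE(3)-bi-equivariance of the SE(3)-projection step, the key step of Proposition 2.) Let r̂ ∈ ℝ^{3×3} and tX, tY, mX, mY ∈ ℝ³. Let r₁, r₂ ∈ SO(3) and t₁, t₂ ∈ ℝ³. Suppose r̂ = U Σ Vᵀ and r₂ r̂ r₁ᵀ = U' Σ V'ᵀ are O(3)-SVDs with the same Σ = diag(σ₁,σ₂,σ₃), σ₁ ≥ σ₂ > σ₃ ≥ 0. Define r = Proj(U,V), t = (mY + tY) − r·(mX + tX), and the output on the transformed features r' = Proj(U',V'), t' = ((r₂ mY + t₂) + r₂ tY) − r'·((r₁ mX + t₁) + r₁ tX). Then r' = r₂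 r r₁ᵀ and t' = r₂ t − r₂ r r₁ᵀ t₁ + t₂. -/
open Matrix

private lemma zero_of_sq (x a b : ℝ) (h : x * (a * a) = b * b * x) (hne : a * a ≠ b * b) :
    x = 0 := by
  have : x * (a * a - b * b) = 0 := by linarith
  rcases mul_eq_zero.mp this with h' | h'
  · exact h'
  · exact absurd (by linarith : a * a = b * b) hne

private lemma eq_of_rel (p q sa sb : ℝ) (h1 : p * sb = sa * q)
    (h2 : p * (sb * sb) = sa * sa * p) (hsa : 0 < sa) (hsb : 0 < sb) : q = p := by
  have hps : p * (sb - sa) * (sb + sa) = 0 := by ring_nf; linarith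
  have h3 : p * sb = p * sa := by
    rcases mul_eq_zero.mp hps with h' | h'
    · rcases mul_eq_zero.mp h' with h'' | h''
      · simp [h'']
      · nlinarith
    · nlinarith
  have : sa * q = sa * p := by rw [← h1, h3]; ring
  exact mul_left_cancel₀ (ne_of_gt hsa) this

lemma key_aux (P Q : Matrix (Fin 3) (Fin 3) ℝ) (σ₁ σ₂ σ₃ ε : ℝ)
    (hP : P * Pᵀ = 1) (hQ : Q * Qᵀ = 1)
    (h12 : σ₁ ≥ σ₂) (h23 : σ₂ > σ₃) (h3 : σ₃ ≥ 0)
    (hPQ : P * diagonal ![σ₁, σ₂, σ₃] = diagonal ![σ₁, σ₂, σ₃] * Q) :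
    P * diagonal ![1, 1, ε] * Qᵀ = diagonal ![1, 1, ε * P.det * Q.det] := by
  have h2pos : (0:ℝ) < σ₂ := lt_of_le_of_lt h3 h23
  have h1pos : (0:ℝ) < σ₁ := lt_of_lt_of_le h2pos h12
  have hPt : Pᵀ * P = 1 := mul_eq_one_comm.mp hP
  have hQt : Qᵀ * Q = 1 := mul_eq_one_comm.mp hQ
  set σ : Fin 3 → ℝ := ![σ₁, σ₂, σ₃] with hσ
  have hPQt : diagonal σ * Pᵀ = Qᵀ * diagonal σ := by
    have := congrArg transpose hPQ
    simpa [transpose_mul, diagonal_transpose] using this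
  -- P and Q commute with Σ²
  have h1 : P * (diagonal σ * diagonal σ) * Pᵀ = diagonal σ * diagonal σ := by
    calc P * (diagonal σ * diagonal σ) * Pᵀ
        = (P * diagonal σ) * (diagonal σ * Pᵀ) := by noncomm_ring
      _ = (diagonal σ * Q) * (Qᵀ * diagonal σ) := by rw [hPQ, hPQt]
      _ = diagonal σ * (Q * Qᵀ) * diagonal σ := by noncomm_ring
      _ = diagonal σ * diagonal σ := by rw [hQ, Matrix.mul_one]
  have hP2 : P * (diagonal σ * diagonal σ) = (diagonal σ * diagonal σ) * P := by
    calc P * (diagonal σ * diagonal σ)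
        = (P * (diagonal σ * diagonal σ) * Pᵀ) * P := by rw [Matrix.mul_assoc, hPt, Matrix.mul_one]
      _ = (diagonal σ * diagonal σ) * P := by rw [h1]
  have h1q : Qᵀ * (diagonal σ * diagonal σ) * Q = diagonal σ * diagonal σ := by
    calc Qᵀ * (diagonal σ * diagonal σ) * Q
        = (Qᵀ * diagonal σ) * (diagonal σ * Q) := by noncomm_ring
      _ = (diagonal σ * Pᵀ) * (P * diagonal σ) := by rw [hPQt, hPQ]
      _ = diagonal σ * (Pᵀ * P) * diagonal σ := by noncomm_ring
      _ = diagonal σ * diagonal σ := by rw [hPt, Matrix.mul_one]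
  have hQ2 : Q * (diagonal σ * diagonal σ) = (diagonal σ * diagonal σ) * Q := by
    have h1q' : Q * (diagonal σ * diagonal σ) * Qᵀ = diagonal σ * diagonal σ := by
      calc Q * (diagonal σ * diagonal σ) * Qᵀ
          = Q * (Qᵀ * (diagonal σ * diagonal σ) * Q) * Qᵀ := by rw [h1q]
        _ = (Q * Qᵀ) * (diagonal σ * diagonal σ) * (Q * Qᵀ) := by noncomm_ring
        _ = diagonal σ * diagonal σ := by rw [hQ, Matrix.one_mul, Matrix.mul_one]
    calc Q * (diagonal σ * diagonal σ)
        = (Q * (diagonal σ * diagonal σ) * Qᵀ) * Q := by rw [Matrix.mul_assoc, hQt, Matrix.mul_one]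
      _ = (diagonal σ * diagonal σ) * Q := by rw [h1q']
  -- entrywise versions
  have e1 : ∀ i j, P i j * σ j = σ i * Q i j := by
    intro i j
    have := (Matrix.ext_iff.2 hPQ) i j
    rwa [Matrix.mul_diagonal, Matrix.diagonal_mul] at this
  have eP2 : ∀ i j, P i j * (σ j * σ j) = σ i * σ i * P i j := by
    intro i j
    have := (Matrix.ext_iff.2 hP2) i j
    rw [diagonal_mul_diagonal] at this
    rwa [Matrix.mul_diagonal, Matrix.diagonal_mul] at this
  have eQ2 : ∀ i j, Q i j * (σ j * σ j) = σ i * σ i * Q i j := by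
    intro i j
    have := (Matrix.ext_iff.2 hQ2) i j
    rw [diagonal_mul_diagonal] at this
    rwa [Matrix.mul_diagonal, Matrix.diagonal_mul] at this
  -- evaluate σ
  have s0 : σ 0 = σ₁ := rfl
  have s1 : σ 1 = σ₂ := rfl
  have s2 : σ 2 = σ₃ := rfl
  -- zero entries
  have hP20 : P 2 0 = 0 := by
    refine zero_of_sq _ σ₁ σ₃ ?_ (by nlinarith)
    have := eP2 2 0; rwa [s0, s2] at this
  have hP21 : P 2 1 = 0 := by
    refine zero_of_sq _ σ₂ σ₃ ?_ (by nlinarith)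
    have := eP2 2 1; rwa [s1, s2] at this
  have hP02 : P 0 2 = 0 := by
    refine zero_of_sq _ σ₃ σ₁ ?_ (by nlinarith)
    have := eP2 0 2; rwa [s0, s2] at this
  have hP12 : P 1 2 = 0 := by
    refine zero_of_sq _ σ₃ σ₂ ?_ (by nlinarith)
    have := eP2 1 2; rwa [s1, s2] at this
  have hQ20 : Q 2 0 = 0 := by
    refine zero_of_sq _ σ₁ σ₃ ?_ (by nlinarith)
    have := eQ2 2 0; rwa [s0, s2] at this
  have hQ21 : Q 2 1 = 0 := by
    refine zero_of_sq _ σ₂ σ₃ ?_ (by nlinarith)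
    have := eQ2 2 1; rwa [s1, s2] at this
  have hQ02 : Q 0 2 = 0 := by
    refine zero_of_sq _ σ₃ σ₁ ?_ (by nlinarith)
    have := eQ2 0 2; rwa [s0, s2] at this
  have hQ12 : Q 1 2 = 0 := by
    refine zero_of_sq _ σ₃ σ₂ ?_ (by nlinarith)
    have := eQ2 1 2; rwa [s1, s2] at this
  -- equal entries on the top block
  have hQ00 : Q 0 0 = P 0 0 := by
    refine eq_of_rel _ _ σ₁ σ₁ ?_ ?_ h1pos h1pos
    · have := e1 0 0; rwa [s0] at this
    · have := eP2 0 0; rwa [s0] at this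
  have hQ01 : Q 0 1 = P 0 1 := by
    refine eq_of_rel _ _ σ₁ σ₂ ?_ ?_ h1pos h2pos
    · have := e1 0 1; rwa [s0, s1] at this
    · have := eP2 0 1; rwa [s0, s1] at this
  have hQ10 : Q 1 0 = P 1 0 := by
    refine eq_of_rel _ _ σ₂ σ₁ ?_ ?_ h2pos h1pos
    · have := e1 1 0; rwa [s0, s1] at this
    · have := eP2 1 0; rwa [s0, s1] at this
  have hQ11 : Q 1 1 = P 1 1 := by
    refine eq_of_rel _ _ σ₂ σ₂ ?_ ?_ h2pos h2pos
    · have := e1 1 1; rwa [s1] at this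
    · have := eP2 1 1; rwa [s1] at this
  -- orthogonality relations, entrywise
  have rowP : ∀ i j, P i 0 * P j 0 + P i 1 * P j 1 + P i 2 * P j 2
      = if i = j then (1:ℝ) else 0 := by
    intro i j
    have := (Matrix.ext_iff.2 hP) i j
    simpa [Matrix.mul_apply, Fin.sum_univ_three, Matrix.one_apply, transpose_apply] using this
  have rowQ : ∀ i j, Q i 0 * Q j 0 + Q i 1 * Q j 1 + Q i 2 * Q j 2
      = if i = j then (1:ℝ) else 0 := by
    intro i j
    have := (Matrix.ext_iff.2 hQ) i j
    simpa [Matrix.mul_apply, Fin.sum_univ_three, Matrix.one_apply, transpose_apply] using this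
  have r00 : P 0 0 * P 0 0 + P 0 1 * P 0 1 = 1 := by
    have := rowP 0 0; rw [hP02] at this; simpa using this
  have r11 : P 1 0 * P 1 0 + P 1 1 * P 1 1 = 1 := by
    have := rowP 1 1; rw [hP12] at this; simpa using this
  have r01 : P 0 0 * P 1 0 + P 0 1 * P 1 1 = 0 := by
    have := rowP 0 1; rw [hP02, hP12] at this; simpa using this
  -- determinants
  have dP : P.det = (P 0 0 * P 1 1 - P 0 1 * P 1 0) * P 2 2 := by
    rw [Matrix.det_fin_three, hP02, hP12, hP20, hP21]; ring
  have dQ : Q.det = (P 0 0 * P 1 1 - P 0 1 * P 1 0) * Q 2 2 := by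
    rw [Matrix.det_fin_three, hQ02, hQ12, hQ20, hQ21, hQ00, hQ01, hQ10, hQ11]; ring
  have blocksq : (P 0 0 * P 1 1 - P 0 1 * P 1 0) ^ 2 = 1 := by
    calc (P 0 0 * P 1 1 - P 0 1 * P 1 0) ^ 2
        = (P 0 0 * P 0 0 + P 0 1 * P 0 1) * (P 1 0 * P 1 0 + P 1 1 * P 1 1)
          - (P 0 0 * P 1 0 + P 0 1 * P 1 1) ^ 2 := by ring
      _ = 1 := by rw [r00, r11, r01]; ring
  -- final entrywise computation
  ext i j
  fin_cases i <;> fin_cases j <;>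
    simp only [Matrix.mul_apply, Matrix.mul_diagonal, transpose_apply, Fin.sum_univ_three,
      Matrix.diagonal_apply, Matrix.cons_val_zero, Matrix.cons_val_one, Matrix.head_cons,
      Matrix.cons_val_two, Matrix.tail_cons, Fin.zero_eta, Fin.mk_one, Fin.isValue, Fin.reduceFinMk,
      if_true, if_false, Fin.reduceEq, reduceIte] <;>
    simp only [hP02, hP12, hP20, hP21, hQ02, hQ12, hQ20, hQ21, hQ00, hQ01, hQ10, hQ11, mul_zero, zero_mul, mul_one, one_mul, add_zero, zero_add]
  all_goals first
    | rfl
    | linarith [r00, r11, r01]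
    | (rw [dP, dQ]; linear_combination (-(ε * P 2 2 * Q 2 2)) * blocksq)

theorem rot_equivariant (rhat U V U' V' r₁ r₂ : Matrix (Fin 3) (Fin 3) ℝ)
    (σ₁ σ₂ σ₃ : ℝ)
    (hr₁ : r₁ᵀ * r₁ = 1 ∧ r₁.det = 1) (hr₂ : r₂ᵀ * r₂ = 1 ∧ r₂.det = 1)
    (hU : Uᵀ * U = 1) (hV : Vᵀ * V = 1) (hU' : U'ᵀ * U' = 1) (hV' : V'ᵀ * V' = 1)
    (h12 : σ₁ ≥ σ₂) (h23 : σ₂ > σ₃) (h3 : σ₃ ≥ 0)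
    (hA : rhat = U * diagonal ![σ₁, σ₂, σ₃] * Vᵀ)
    (hA' : r₂ * rhat * r₁ᵀ = U' * diagonal ![σ₁, σ₂, σ₃] * V'ᵀ) :
    (U' * diagonal ![1, 1, (U' * V'ᵀ).det] * V'ᵀ)
      = r₂ * (U * diagonal ![1, 1, (U * Vᵀ).det] * Vᵀ) * r₁ᵀ := by
  obtain ⟨hr₁o, hr₁d⟩ := hr₁
  obtain ⟨hr₂o, hr₂d⟩ := hr₂
  have hU2 : U * Uᵀ = 1 := mul_eq_one_comm.mp hU
  have hV2 : V * Vᵀ = 1 := mul_eq_one_comm.mp hV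
  have hU'2 : U' * U'ᵀ = 1 := mul_eq_one_comm.mp hU'
  have hV'2 : V' * V'ᵀ = 1 := mul_eq_one_comm.mp hV'
  have hr₂2 : r₂ * r₂ᵀ = 1 := mul_eq_one_comm.mp hr₂o
  have hr₁2 : r₁ * r₁ᵀ = 1 := mul_eq_one_comm.mp hr₁o
  set Sg : Matrix (Fin 3) (Fin 3) ℝ := diagonal ![σ₁, σ₂, σ₃] with hSg
  set P : Matrix (Fin 3) (Fin 3) ℝ := U'ᵀ * r₂ * U with hPdef
  set Q : Matrix (Fin 3) (Fin 3) ℝ := V'ᵀ * r₁ * V with hQdef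
  have hPo : P * Pᵀ = 1 := by
    calc P * Pᵀ = U'ᵀ * (r₂ * ((U * Uᵀ) * (r₂ᵀ * U'))) := by
          rw [hPdef]; simp only [transpose_mul, transpose_transpose]; noncomm_ring
      _ = U'ᵀ * ((r₂ * r₂ᵀ) * U') := by rw [hU2, Matrix.one_mul]; noncomm_ring
      _ = 1 := by rw [hr₂2, Matrix.one_mul, hU']
  have hQo : Q * Qᵀ = 1 := by
    calc Q * Qᵀ = V'ᵀ * (r₁ * ((V * Vᵀ) * (r₁ᵀ * V'))) := by
          rw [hQdef]; simp only [transpose_mul, transpose_transpose]; noncomm_ring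
      _ = V'ᵀ * ((r₁ * r₁ᵀ) * V') := by rw [hV2, Matrix.one_mul]; noncomm_ring
      _ = 1 := by rw [hr₁2, Matrix.one_mul, hV']
  have hQto : Qᵀ * Q = 1 := mul_eq_one_comm.mp hQo
  have hA'' : r₂ * (U * Sg * Vᵀ) * r₁ᵀ = U' * Sg * V'ᵀ := by rw [← hA]; exact hA'
  have key : P * Sg * Qᵀ = Sg := by
    calc P * Sg * Qᵀ = U'ᵀ * (r₂ * (U * Sg * Vᵀ) * r₁ᵀ) * V' := by
          rw [hPdef, hQdef]; simp only [transpose_mul, transpose_transpose]; noncomm_ring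
      _ = U'ᵀ * (U' * Sg * V'ᵀ) * V' := by rw [hA'']
      _ = (U'ᵀ * U') * Sg * (V'ᵀ * V') := by noncomm_ring
      _ = Sg := by rw [hU', hV', Matrix.one_mul, Matrix.mul_one]
  have hPQ : P * Sg = Sg * Q := by
    calc P * Sg = (P * Sg * Qᵀ) * Q := by rw [Matrix.mul_assoc (P * Sg), hQto, Matrix.mul_one]
      _ = Sg * Q := by rw [key]
  have kk := key_aux P Q σ₁ σ₂ σ₃ ((U * Vᵀ).det) hPo hQo h12 h23 h3 hPQ
  have hdetU : U.det * U.det = 1 := by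
    have := congrArg Matrix.det hU
    rwa [Matrix.det_mul, Matrix.det_transpose, Matrix.det_one] at this
  have hdetV : V.det * V.det = 1 := by
    have := congrArg Matrix.det hV
    rwa [Matrix.det_mul, Matrix.det_transpose, Matrix.det_one] at this
  have hε : (U * Vᵀ).det * P.det * Q.det = (U' * V'ᵀ).det := by
    rw [hPdef, hQdef]
    simp only [Matrix.det_mul, Matrix.det_transpose, hr₁d, hr₂d]
    linear_combination (U'.det * V'.det * V.det * V.det) * hdetU + (U'.det * V'.det) * hdetV
  have expand : U' * (P * diagonal ![1, 1, (U * Vᵀ).det] * Qᵀ) * V'ᵀ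
      = r₂ * (U * diagonal ![1, 1, (U * Vᵀ).det] * Vᵀ) * r₁ᵀ := by
    calc U' * (P * diagonal ![1, 1, (U * Vᵀ).det] * Qᵀ) * V'ᵀ
        = (U' * U'ᵀ) * (r₂ * (U * diagonal ![1, 1, (U * Vᵀ).det] * Vᵀ) * r₁ᵀ) * (V' * V'ᵀ) := by
          rw [hPdef, hQdef]; simp only [transpose_mul, transpose_transpose]; noncomm_ring
      _ = r₂ * (U * diagonal ![1, 1, (U * Vᵀ).det] * Vᵀ) * r₁ᵀ := by
          rw [hU'2, hV'2, Matrix.one_mul, Matrix.mul_one]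
  calc U' * diagonal ![1, 1, (U' * V'ᵀ).det] * V'ᵀ
      = U' * diagonal ![1, 1, (U * Vᵀ).det * P.det * Q.det] * V'ᵀ := by rw [hε]
    _ = U' * (P * diagonal ![1, 1, (U * Vᵀ).det] * Qᵀ) * V'ᵀ := by rw [kk]
    _ = r₂ * (U * diagonal ![1, 1, (U * Vᵀ).det] * Vᵀ) * r₁ᵀ := expand


/-- SE(3)-bi-equivariance of the SE(3)-projection step. Given a feature
`r̂`, offsets `tX, tY`, means `mX, mY`, rigid perturbations `(r₁,t₁), (r₂,t₂)` with
`r₁, r₂ ∈ SO(3)`, and O(3)-SVDs `r̂ = U Σ Vᵀ`, `r₂ r̂ r₁ᵀ = U' Σ V'ᵀ` with the same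
`Σ = diag(σ₁,σ₂,σ₃)`, `σ₁ ≥ σ₂ > σ₃ ≥ 0`, the outputs
`r = Proj(U,V)`, `t = (mY + tY) − r(mX + tX)` and
`r' = Proj(U',V')`, `t' = ((r₂ mY + t₂) + r₂ tY) − r'((r₁ mX + t₁) + r₁ tX)` satisfy
`r' = r₂ r r₁ᵀ` and `t' = r₂ t − r₂ r r₁ᵀ t₁ + t₂`. -/
theorem se3Proj_bi_equivariant (rhat U V U' V' r₁ r₂ : Matrix (Fin 3) (Fin 3) ℝ)
    (tX tY mX mY t₁ t₂ : Fin 3 → ℝ) (σ₁ σ₂ σ₃ : ℝ)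
    (hr₁ : IsSO3 r₁) (hr₂ : IsSO3 r₂)
    (hU : IsOrtho3 U) (hV : IsOrtho3 V) (hU' : IsOrtho3 U') (hV' : IsOrtho3 V')
    (h12 : σ₁ ≥ σ₂) (h23 : σ₂ > σ₃) (h3 : σ₃ ≥ 0)
    (hA : rhat = U * diagonal ![σ₁, σ₂, σ₃] * Vᵀ)
    (hA' : r₂ * rhat * r₁ᵀ = U' * diagonal ![σ₁, σ₂, σ₃] * V'ᵀ) :
    svdProj U' V' = r₂ * svdProj U V * r₁ᵀ ∧
    ((r₂.mulVec mY + t₂) + r₂.mulVec tY)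
        - (svdProj U' V').mulVec ((r₁.mulVec mX + t₁) + r₁.mulVec tX)
      = r₂.mulVec ((mY + tY) - (svdProj U V).mulVec (mX + tX))
        - (r₂ * svdProj U V * r₁ᵀ).mulVec t₁ + t₂ := by
  have hrot : svdProj U' V' = r₂ * svdProj U V * r₁ᵀ :=
    rot_equivariant rhat U V U' V' r₁ r₂ σ₁ σ₂ σ₃ hr₁ hr₂ hU hV hU' hV' h12 h23 h3 hA hA'
  refine ⟨hrot, ?_⟩
  rw [hrot]
  set r : Matrix (Fin 3) (Fin 3) ℝ := svdProj U V with hrdef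
  have hcomp : ∀ v : Fin 3 → ℝ,
      (r₂ * r * r₁ᵀ).mulVec (r₁.mulVec v) = r₂.mulVec (r.mulVec v) := by
    intro v
    rw [Matrix.mulVec_mulVec, Matrix.mulVec_mulVec, Matrix.mul_assoc (r₂ * r), hr₁.1,
      Matrix.mul_one]
  simp only [Matrix.mulVec_add, Matrix.mulVec_sub, hcomp]
  abel
end

section
/- (Proposition 5: scale-equivariance of the SE(3)-projection step.) Let r̂ ∈ ℝ^{3×3}, tX, tY, mX, mY ∈ ℝ³, and c > 0. Suppose r̂ = U Σ Vᵀ and c·r̂ = U' (cΣ) V'ᵀ are O(3)-SVDs, where Σ = diag(σ₁,σ₂,σ₃), σ₁ ≥ σ₂ > σ₃ ≥ 0. Define r = Proj(U,V), t = (mY + tY) − r·(mX + tX), and the output on the scaled features r' = Proj(U',V'), t' = (c·mY + c·tY) − r'·(c·mX + c·tX). Then r' = r and t' = c·t. -/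
open Matrix

private lemma svd_aux_eq (a b u v : ℝ) (h1 : a * u = v * b) (h2 : b * u = v * a)
    (hpos : 0 < u + v) : a = b := by
  have h3 : (a - b) * (u + v) = 0 := by linear_combination h1 - h2
  rcases mul_eq_zero.mp h3 with h | h
  · exact sub_eq_zero.mp h
  · linarith

private lemma svd_aux_zero (a b u v : ℝ) (h1 : a * u = v * b) (h2 : b * u = v * a)
    (hne : u ≠ v) (hpos : 0 < u + v) : a = 0 ∧ b = 0 := by
  have hab := svd_aux_eq a b u v h1 h2 hpos
  have h3 : (a + b) * (u - v) = 0 := by linear_combination h1 + h2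
  rcases mul_eq_zero.mp h3 with h | h
  · constructor <;> nlinarith
  · exact absurd (by linarith) hne

set_option maxHeartbeats 1000000 in
/-- Proposition 5: scale-equivariance of the SE(3)-projection step.
Given a feature `r̂`, offsets `tX, tY`, means `mX, mY`, a scale `c > 0`, and O(3)-SVDs
`r̂ = U Σ Vᵀ`, `c r̂ = U' (cΣ) V'ᵀ` with `Σ = diag(σ₁,σ₂,σ₃)`, `σ₁ ≥ σ₂ > σ₃ ≥ 0`, the
outputs `r = Proj(U,V)`, `t = (mY + tY) − r(mX + tX)` and the scaled outputs
`r' = Proj(U',V')`, `t' = (c mY + c tY) − r'(c mX + c tX)` satisfy `r' = r`, `t' = c t`. -/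
theorem se3Proj_scale_equivariant (rhat U V U' V' : Matrix (Fin 3) (Fin 3) ℝ)
    (tX tY mX mY : Fin 3 → ℝ) (σ₁ σ₂ σ₃ c : ℝ) (hc : 0 < c)
    (hU : IsOrtho3 U) (hV : IsOrtho3 V) (hU' : IsOrtho3 U') (hV' : IsOrtho3 V')
    (h12 : σ₁ ≥ σ₂) (h23 : σ₂ > σ₃) (h3 : σ₃ ≥ 0)
    (hA : rhat = U * diagonal ![σ₁, σ₂, σ₃] * Vᵀ)
    (hA' : c • rhat = U' * (c • diagonal ![σ₁, σ₂, σ₃]) * V'ᵀ) :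
    svdProj U' V' = svdProj U V ∧
    (c • mY + c • tY) - (svdProj U' V').mulVec (c • mX + c • tX)
      = c • ((mY + tY) - (svdProj U V).mulVec (mX + tX)) := by
  unfold IsOrtho3 at hU hV hU' hV'
  have hU'o : U' * U'ᵀ = 1 := mul_eq_one_comm.mp hU'
  have hV'o : V' * V'ᵀ = 1 := mul_eq_one_comm.mp hV'
  set S : Matrix (Fin 3) (Fin 3) ℝ := diagonal ![σ₁, σ₂, σ₃] with hSdef
  -- cancel the scale
  have hA'' : rhat = U' * S * V'ᵀ := by
    have h : c • rhat = c • (U' * S * V'ᵀ) := by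
      rw [hA', Matrix.mul_smul, Matrix.smul_mul]
    exact smul_right_injective _ (ne_of_gt hc) h
  have hEq : U * S * Vᵀ = U' * S * V'ᵀ := hA.symm.trans hA''
  set W : Matrix (Fin 3) (Fin 3) ℝ := U'ᵀ * U with hWdef
  set Z : Matrix (Fin 3) (Fin 3) ℝ := V'ᵀ * V with hZdef
  have hWo : Wᵀ * W = 1 := by
    rw [hWdef, Matrix.transpose_mul, Matrix.transpose_transpose, Matrix.mul_assoc,
      ← Matrix.mul_assoc U' U'ᵀ U, hU'o, Matrix.one_mul, hU]
  have hWo2 : W * Wᵀ = 1 := mul_eq_one_comm.mp hWo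
  have hZo : Zᵀ * Z = 1 := by
    rw [hZdef, Matrix.transpose_mul, Matrix.transpose_transpose, Matrix.mul_assoc,
      ← Matrix.mul_assoc V' V'ᵀ V, hV'o, Matrix.one_mul, hV]
  have hZo2 : Z * Zᵀ = 1 := mul_eq_one_comm.mp hZo
  -- the intertwining relations
  have hWS : W * S = S * Z := by
    have h := congrArg (fun M => U'ᵀ * M * V) hEq
    simp only [Matrix.mul_assoc] at h
    rw [hV, Matrix.mul_one, ← Matrix.mul_assoc U'ᵀ U', hU', Matrix.one_mul] at h
    rw [hWdef, hZdef, Matrix.mul_assoc]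
    exact h
  have hST : Sᵀ = S := by rw [hSdef, Matrix.diagonal_transpose]
  have hZS : Z * S = S * W := by
    have h : S * Zᵀ = Wᵀ * S := by
      calc S * Zᵀ = (Wᵀ * W) * S * Zᵀ := by rw [hWo, Matrix.one_mul]
        _ = Wᵀ * (W * S) * Zᵀ := by rw [Matrix.mul_assoc Wᵀ W S]
        _ = Wᵀ * (S * Z) * Zᵀ := by rw [hWS]
        _ = Wᵀ * S * (Z * Zᵀ) := by simp only [Matrix.mul_assoc]
        _ = Wᵀ * S := by rw [hZo2, Matrix.mul_one]
    have h2 := congrArg Matrix.transpose h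
    simp only [Matrix.transpose_mul, Matrix.transpose_transpose, hST] at h2
    exact h2
  -- entrywise consequences
  have e1 : ∀ i j, W i j * ![σ₁, σ₂, σ₃] j = ![σ₁, σ₂, σ₃] i * Z i j := by
    intro i j
    have h := congrFun (congrFun hWS i) j
    rw [hSdef] at h
    simpa [Matrix.mul_diagonal, Matrix.diagonal_mul] using h
  have e2 : ∀ i j, Z i j * ![σ₁, σ₂, σ₃] j = ![σ₁, σ₂, σ₃] i * W i j := by
    intro i j
    have h := congrFun (congrFun hZS i) j
    rw [hSdef] at h
    simpa [Matrix.mul_diagonal, Matrix.diagonal_mul] using h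
  have hσ2 : 0 < σ₂ := lt_of_le_of_lt h3 h23
  have hσ1 : 0 < σ₁ := lt_of_lt_of_le hσ2 h12
  -- zeros in the third row/column of W and Z
  have z02 : W 0 2 = 0 ∧ Z 0 2 = 0 :=
    svd_aux_zero _ _ _ _ (e1 0 2) (e2 0 2)
      (show σ₃ ≠ σ₁ from ne_of_lt (by linarith)) (show (0:ℝ) < σ₃ + σ₁ by linarith)
  have z12 : W 1 2 = 0 ∧ Z 1 2 = 0 :=
    svd_aux_zero _ _ _ _ (e1 1 2) (e2 1 2)
      (show σ₃ ≠ σ₂ from ne_of_lt (by linarith)) (show (0:ℝ) < σ₃ + σ₂ by linarith)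
  have z20 : W 2 0 = 0 ∧ Z 2 0 = 0 :=
    svd_aux_zero _ _ _ _ (e1 2 0) (e2 2 0)
      (show σ₁ ≠ σ₃ from ne_of_gt (by linarith)) (show (0:ℝ) < σ₁ + σ₃ by linarith)
  have z21 : W 2 1 = 0 ∧ Z 2 1 = 0 :=
    svd_aux_zero _ _ _ _ (e1 2 1) (e2 2 1)
      (show σ₂ ≠ σ₃ from ne_of_gt (by linarith)) (show (0:ℝ) < σ₂ + σ₃ by linarith)
  -- equality on the upper 2×2 block
  have b00 : W 0 0 = Z 0 0 :=
    svd_aux_eq _ _ _ _ (e1 0 0) (e2 0 0) (show (0:ℝ) < σ₁ + σ₁ by linarith)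
  have b01 : W 0 1 = Z 0 1 :=
    svd_aux_eq _ _ _ _ (e1 0 1) (e2 0 1) (show (0:ℝ) < σ₂ + σ₁ by linarith)
  have b10 : W 1 0 = Z 1 0 :=
    svd_aux_eq _ _ _ _ (e1 1 0) (e2 1 0) (show (0:ℝ) < σ₁ + σ₂ by linarith)
  have b11 : W 1 1 = Z 1 1 :=
    svd_aux_eq _ _ _ _ (e1 1 1) (e2 1 1) (show (0:ℝ) < σ₂ + σ₂ by linarith)
  -- row orthonormality of W and Z
  have row : ∀ i j, W i 0 * W j 0 + W i 1 * W j 1 + W i 2 * W j 2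
      = (1 : Matrix (Fin 3) (Fin 3) ℝ) i j := by
    intro i j
    have h := congrFun (congrFun hWo2 i) j
    simpa [Matrix.mul_apply, Fin.sum_univ_three, Matrix.transpose_apply] using h
  have zrow : ∀ i j, Z i 0 * Z j 0 + Z i 1 * Z j 1 + Z i 2 * Z j 2
      = (1 : Matrix (Fin 3) (Fin 3) ℝ) i j := by
    intro i j
    have h := congrFun (congrFun hZo2 i) j
    simpa [Matrix.mul_apply, Fin.sum_univ_three, Matrix.transpose_apply] using h
  -- determinants
  have hdetW : W.det = U'.det * U.det := by
    rw [hWdef, Matrix.det_mul, Matrix.det_transpose]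
  have hdetZ : Z.det = V'.det * V.det := by
    rw [hZdef, Matrix.det_mul, Matrix.det_transpose]
  have hU2 : U.det * U.det = 1 := by
    have := congrArg Matrix.det hU
    simpa [Matrix.det_mul, Matrix.det_transpose] using this
  have hV2 : V.det * V.det = 1 := by
    have := congrArg Matrix.det hV
    simpa [Matrix.det_mul, Matrix.det_transpose] using this
  have hU'2 : U'.det * U'.det = 1 := by
    have := congrArg Matrix.det hU'
    simpa [Matrix.det_mul, Matrix.det_transpose] using this
  have hV'2 : V'.det * V'.det = 1 := by
    have := congrArg Matrix.det hV'
    simpa [Matrix.det_mul, Matrix.det_transpose] using this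
  have hd : (U * Vᵀ).det = U.det * V.det := by
    rw [Matrix.det_mul, Matrix.det_transpose]
  have hd' : (U' * V'ᵀ).det = U'.det * V'.det := by
    rw [Matrix.det_mul, Matrix.det_transpose]
  -- the sign entries
  have hε2 : W 2 2 * W 2 2 = 1 := by
    have h := row 2 2
    rw [z20.1, z21.1] at h
    simpa using h
  have hε'2 : Z 2 2 * Z 2 2 = 1 := by
    have h := zrow 2 2
    rw [z20.2, z21.2] at h
    simpa using h
  -- determinant expansions
  have hdetWe : W 2 2 * (W 0 0 * W 1 1 - W 0 1 * W 1 0) = U'.det * U.det := by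
    have h := Matrix.det_fin_three W
    rw [z02.1, z12.1, z20.1, z21.1, hdetW] at h
    linear_combination -h
  have hdetZe : Z 2 2 * (W 0 0 * W 1 1 - W 0 1 * W 1 0) = V'.det * V.det := by
    have h := Matrix.det_fin_three Z
    rw [z02.2, z12.2, z20.2, z21.2, ← b00, ← b01, ← b10, ← b11, hdetZ] at h
    linear_combination -h
  have hΔ2 : (W 0 0 * W 1 1 - W 0 1 * W 1 0) * (W 0 0 * W 1 1 - W 0 1 * W 1 0) = 1 := by
    linear_combination (-((W 0 0 * W 1 1 - W 0 1 * W 1 0) *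
        (W 0 0 * W 1 1 - W 0 1 * W 1 0))) * hε2
      + (W 2 2 * (W 0 0 * W 1 1 - W 0 1 * W 1 0) + U'.det * U.det) * hdetWe
      + (U.det * U.det) * hU'2 + hU2
  have hkey22 : W 2 2 * (U * Vᵀ).det * Z 2 2 = (U' * V'ᵀ).det := by
    rw [hd, hd']
    linear_combination (-(U.det * V.det * W 2 2 * Z 2 2)) * hΔ2
      + (U.det * V.det * Z 2 2 * (W 0 0 * W 1 1 - W 0 1 * W 1 0)) * hdetWe
      + (U.det * V.det * U'.det * U.det) * hdetZe
      + (U'.det * V'.det * V.det * V.det) * hU2 + (U'.det * V'.det) * hV2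
  -- the nine entries of W * diag(1,1,d) * Zᵀ
  have entry : ∀ i j : Fin 3, (W * diagonal ![1, 1, (U * Vᵀ).det] * Zᵀ) i j
      = W i 0 * Z j 0 + W i 1 * Z j 1 + W i 2 * (U * Vᵀ).det * Z j 2 := by
    intro i j
    rw [Matrix.mul_apply]
    simp [Fin.sum_univ_three, Matrix.mul_diagonal, Matrix.transpose_apply]
  have g00 : W 0 0 * Z 0 0 + W 0 1 * Z 0 1 + W 0 2 * (U * Vᵀ).det * Z 0 2 = 1 := by
    have h := row 0 0
    rw [z02.1, Matrix.one_apply_eq] at h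
    rw [← b00, ← b01, z02.1]
    linear_combination h
  have g01 : W 0 0 * Z 1 0 + W 0 1 * Z 1 1 + W 0 2 * (U * Vᵀ).det * Z 1 2 = 0 := by
    have h := row 0 1
    rw [z02.1, z12.1, Matrix.one_apply_ne (by decide : (0 : Fin 3) ≠ 1)] at h
    rw [← b10, ← b11, z02.1]
    linear_combination h
  have g02 : W 0 0 * Z 2 0 + W 0 1 * Z 2 1 + W 0 2 * (U * Vᵀ).det * Z 2 2 = 0 := by
    rw [z20.2, z21.2, z02.1]; ring
  have g10 : W 1 0 * Z 0 0 + W 1 1 * Z 0 1 + W 1 2 * (U * Vᵀ).det * Z 0 2 = 0 := by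
    have h := row 1 0
    rw [z12.1, z02.1, Matrix.one_apply_ne (by decide : (1 : Fin 3) ≠ 0)] at h
    rw [← b00, ← b01, z12.1]
    linear_combination h
  have g11 : W 1 0 * Z 1 0 + W 1 1 * Z 1 1 + W 1 2 * (U * Vᵀ).det * Z 1 2 = 1 := by
    have h := row 1 1
    rw [z12.1, Matrix.one_apply_eq] at h
    rw [← b10, ← b11, z12.1]
    linear_combination h
  have g12 : W 1 0 * Z 2 0 + W 1 1 * Z 2 1 + W 1 2 * (U * Vᵀ).det * Z 2 2 = 0 := by
    rw [z20.2, z21.2, z12.1]; ring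
  have g20 : W 2 0 * Z 0 0 + W 2 1 * Z 0 1 + W 2 2 * (U * Vᵀ).det * Z 0 2 = 0 := by
    rw [z20.1, z21.1, z02.2]; ring
  have g21 : W 2 0 * Z 1 0 + W 2 1 * Z 1 1 + W 2 2 * (U * Vᵀ).det * Z 1 2 = 0 := by
    rw [z20.1, z21.1, z12.2]; ring
  have g22 : W 2 0 * Z 2 0 + W 2 1 * Z 2 1 + W 2 2 * (U * Vᵀ).det * Z 2 2
      = (U' * V'ᵀ).det := by
    rw [z20.1, z21.1]
    linear_combination hkey22
  have key : W * diagonal ![1, 1, (U * Vᵀ).det] * Zᵀ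
      = diagonal ![1, 1, (U' * V'ᵀ).det] := by
    ext i j
    rw [entry i j]
    fin_cases i <;> fin_cases j
    exacts [g00, g01, g02, g10, g11, g12, g20, g21, g22]
  have hUW : U' * W = U := by
    rw [hWdef, ← Matrix.mul_assoc, hU'o, Matrix.one_mul]
  have hVZ : V' * Z = V := by
    rw [hZdef, ← Matrix.mul_assoc, hV'o, Matrix.one_mul]
  have hr : svdProj U' V' = svdProj U V := by
    unfold svdProj
    calc U' * diagonal ![1, 1, (U' * V'ᵀ).det] * V'ᵀ
        = U' * (W * diagonal ![1, 1, (U * Vᵀ).det] * Zᵀ) * V'ᵀ := by rw [key]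
      _ = (U' * W) * diagonal ![1, 1, (U * Vᵀ).det] * (V' * Z)ᵀ := by
          rw [Matrix.transpose_mul V' Z]; simp only [Matrix.mul_assoc]
      _ = U * diagonal ![1, 1, (U * Vᵀ).det] * Vᵀ := by rw [hUW, hVZ]
  refine ⟨hr, ?_⟩
  rw [hr, ← smul_add c mX tX, ← smul_add c mY tY, Matrix.mulVec_smul, smul_sub]
end
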